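/- arXiv:1406.1709 — 6 statements merged into one kernel-verified Lean document; each statement's English description precedes it below -/
import Mathlib

section
/- Let n, i, j be integers with i ≥ j ≥ 0, i + j ≤ n and i + j ≡ n (mod 2). Then the number of pairs (P,Q) of lattice paths of length n satisfying −P ≤ Q ≤ P, h(P) = i + j and h(Q) = i − j equals the number of pairs (P,Q) of lattice paths of length n satisfying Q ≤ P, P ≥ 0, Q ≥ 0 and i − j ≤ h(Q) ≤ i + j ≤ h(P). -/
/-- A lattice path of length `n`: each step is `+1` (U) or `-1` (D). -/
def IsPath {n : ℕ} (P : Fin n → ℤ) : Prop := ∀ l, P l = 1 ∨ P l = -1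

/-- Height of the path `P` at `x = a`: sum of the first `a` steps. -/
def ht {n : ℕ} (P : Fin n → ℤ) (a : ℕ) : ℤ :=
  ∑ l ∈ Finset.univ.filter (fun l : Fin n => (l : ℕ) < a), P l

/-!
A pair of paths `(P, Q)` is a walk in `ℤ²` with diagonal steps `(±1, ±1)`, so both sides count
walks from the origin confined to a region: the cone `-x ≤ y ≤ x` and ending at `(i + j, i - j)`
on the left, the octant `0 ≤ y ≤ x` and ending in the window `i - j ≤ y ≤ i + j ≤ x` on the right.
Such counts are iterates of the transfer operator `T_R F z = ∑_d [z + d ∈ R] F (z + d)`, and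
`(T_cone)^n δ_(q,p) = (T_octant)^n 1_W(p,q)` at the origin is proved by induction on `n`, peeling
off the last step. On the left, `T_cone δ_(q,p)` is the sum of the four deltas at `(q ± 1, p ± 1)`.
On the right, at the points reachable in `n` steps (which have the parity of `n`), the number of
steps into `W(p, q)` is the sum of the indicators of the four windows `W(p ± 1, q ± 1)`.
At the boundary `p = 0` the reflection `y ↦ -y`, which preserves the cone, turns `δ_(q-1,-1)`
into `δ_(q-1,1)`, while `W(-1, q - 1)` and `W(1, q - 1)` agree at the reachable points.
-/

namespace PathPair

open Finset

def paths (n : ℕ) : Finset (Fin n → ℤ) := Fintype.piFinset fun _ => {1, -1}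

lemma mem_paths {n : ℕ} {P : Fin n → ℤ} : P ∈ paths n ↔ IsPath P := by
  simp [paths, IsPath]

lemma sum_paths_succ {M : Type*} [AddCommMonoid M] (n : ℕ) (g : (Fin (n + 1) → ℤ) → M) :
    ∑ P ∈ paths (n + 1), g P = ∑ s ∈ {1, -1}, ∑ P ∈ paths n, g (Fin.cons s P) := by
  have h := filter_piFinset_eq_map_consEquiv (fun _ : Fin (n + 1) => ({1, -1} : Finset ℤ))
    (fun _ => True)
  rw [filter_true, filter_true] at h
  rw [paths, h, sum_map, sum_product]
  rfl

lemma natCard_isPath_pair_eq_sum {n : ℕ} (C : (Fin n → ℤ) × (Fin n → ℤ) → Prop)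
    [DecidablePred C] :
    Nat.card {PQ : (Fin n → ℤ) × (Fin n → ℤ) // IsPath PQ.1 ∧ IsPath PQ.2 ∧ C PQ} =
      ∑ P ∈ paths n, ∑ Q ∈ paths n, if C (P, Q) then 1 else 0 := by
  rw [← sum_product' (f := fun P Q => if C (P, Q) then 1 else 0), ← card_filter,
    ← Nat.card_eq_finsetCard]
  exact Nat.card_congr (Equiv.subtypeEquivRight fun PQ => by simp [mem_paths, and_assoc])

@[simp] lemma ht_zero {n : ℕ} (P : Fin n → ℤ) : ht P 0 = 0 := by
  simp [ht]

lemma ht_cons_succ {n : ℕ} (s : ℤ) (P : Fin n → ℤ) (a : ℕ) :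
    ht (Fin.cons s P : Fin (n + 1) → ℤ) (a + 1) = s + ht P a := by
  simp [ht, sum_filter, Fin.sum_univ_succ]

lemma forall_le_add_one_iff {p : ℕ → Prop} {n : ℕ} :
    (∀ a ≤ n + 1, p a) ↔ p 0 ∧ ∀ a ≤ n, p (a + 1) := by
  refine ⟨fun h => ⟨h 0 (Nat.zero_le _), fun a ha => h (a + 1) (by omega)⟩, ?_⟩
  rintro ⟨h0, h⟩ (_ | a) ha
  exacts [h0, h a (by omega)]

noncomputable def transfer (R : Set (ℤ × ℤ)) : (ℤ × ℤ → ℕ) →+ (ℤ × ℤ → ℕ) where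
  toFun F z := ∑ s ∈ {1, -1}, ∑ t ∈ {1, -1}, R.indicator F (z + (s, t))
  map_zero' := by ext; simp
  map_add' F G := by ext; simp only [Set.indicator_add', Pi.add_apply, sum_add_distrib]

lemma transfer_apply (R : Set (ℤ × ℤ)) (F : ℤ × ℤ → ℕ) (z : ℤ × ℤ) :
    transfer R F z = ∑ s ∈ {1, -1}, ∑ t ∈ {1, -1}, R.indicator F (z + (s, t)) := rfl

theorem natCard_isPath_pair_eq_transfer (R E : Set (ℤ × ℤ)) (n : ℕ) (z : ℤ × ℤ) :
    Nat.card {PQ : (Fin n → ℤ) × (Fin n → ℤ) // IsPath PQ.1 ∧ IsPath PQ.2 ∧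
      (∀ a ≤ n, z + (ht PQ.1 a, ht PQ.2 a) ∈ R) ∧ z + (ht PQ.1 n, ht PQ.2 n) ∈ E} =
      R.indicator ((transfer R)^[n] (E.indicator 1)) z := by
  classical
  rw [natCard_isPath_pair_eq_sum]
  induction n generalizing z with
  | zero => simp [paths, Set.indicator_apply, ite_and, Prod.mk_zero_zero]
  | succ n ih =>
    have hcons (s t : ℤ) (P Q : Fin n → ℤ) :
        ((∀ a ≤ n + 1, z + (ht (Fin.cons s P : Fin (n + 1) → ℤ) a,
            ht (Fin.cons t Q : Fin (n + 1) → ℤ) a) ∈ R) ∧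
          z + (ht (Fin.cons s P : Fin (n + 1) → ℤ) (n + 1),
            ht (Fin.cons t Q : Fin (n + 1) → ℤ) (n + 1)) ∈ E) ↔
        z ∈ R ∧ ((∀ a ≤ n, z + (s, t) + (ht P a, ht Q a) ∈ R) ∧
          z + (s, t) + (ht P n, ht Q n) ∈ E) := by
      simp only [forall_le_add_one_iff, ht_zero, ht_cons_succ, Prod.mk_zero_zero, add_zero,
        Prod.mk_add_mk, add_assoc]
      tauto
    simp only [sum_paths_succ] at ih ⊢
    rw [Function.iterate_succ_apply', Set.indicator_apply]
    split_ifs with hz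
    · simp only [hcons, hz, true_and, transfer_apply, ← ih]
      exact sum_congr rfl fun s _ => sum_comm
    · simp [hcons, hz]

lemma iterate_transfer_apply_congr {R : Set (ℤ × ℤ)} {f g : ℤ × ℤ → ℕ} (n : ℕ) {z : ℤ × ℤ}
    (hz : z ∈ R)
    (hfg : ∀ w ∈ R, w.1 % 2 = (z.1 + n) % 2 → w.2 % 2 = (z.2 + n) % 2 → f w = g w) :
    (transfer R)^[n] f z = (transfer R)^[n] g z := by
  induction n generalizing z with
  | zero => exact hfg z hz (by simp) (by simp)
  | succ n ih =>
    simp only [Function.iterate_succ_apply', transfer_apply]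
    refine sum_congr rfl fun s hs => sum_congr rfl fun t ht => ?_
    simp only [mem_insert, mem_singleton] at hs ht
    by_cases hw : z + (s, t) ∈ R
    · rw [Set.indicator_of_mem hw, Set.indicator_of_mem hw]
      refine ih hw fun w hwR h₁ h₂ => hfg w hwR ?_ ?_ <;> simp at h₁ h₂ <;> omega
    · rw [Set.indicator_of_notMem hw, Set.indicator_of_notMem hw]

lemma iterate_transfer_apply_eq_zero {R : Set (ℤ × ℤ)} {f : ℤ × ℤ → ℕ} (n : ℕ) {z : ℤ × ℤ}
    (hz : z ∈ R) (hf : ∀ w ∈ R, f w = 0) : (transfer R)^[n] f z = 0 := by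
  rw [iterate_transfer_apply_congr n hz (g := 0) fun w hw _ _ => hf w hw, iterate_map_zero]
  rfl

lemma transfer_single {R : Set (ℤ × ℤ)} {w : ℤ × ℤ} (hw : w ∈ R) :
    transfer R (Pi.single w 1) = Pi.single (w - (1, 1)) 1 + Pi.single (w - (1, -1)) 1
      + Pi.single (w - (-1, 1)) 1 + Pi.single (w - (-1, -1)) 1 := by
  have hR : R.indicator (Pi.single w 1) = Pi.single w 1 :=
    Set.indicator_eq_self.2 (Pi.support_single_subset.trans (Set.singleton_subset_iff.2 hw))
  ext z
  simp only [transfer_apply, hR, sum_pair (show (1 : ℤ) ≠ -1 by decide), Pi.add_apply,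
    Pi.single_apply, eq_sub_iff_add_eq]
  ring

def reflect : ℤ × ℤ →+ ℤ × ℤ := (AddMonoidHom.id ℤ).prodMap (-AddMonoidHom.id ℤ)

@[simp] lemma reflect_apply (z : ℤ × ℤ) : reflect z = (z.1, -z.2) := rfl

lemma transfer_comp_reflect {R : Set (ℤ × ℤ)} (hR : reflect ⁻¹' R = R) (f : ℤ × ℤ → ℕ) :
    transfer R (f ∘ reflect) = transfer R f ∘ reflect := by
  ext z
  simp only [transfer_apply, Function.comp_apply]
  conv_lhs => rw [← hR]
  simp only [Set.indicator_comp_right, map_add, sum_pair (show (1 : ℤ) ≠ -1 by decide),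
    reflect_apply, neg_neg]
  ring

lemma iterate_transfer_comp_reflect {R : Set (ℤ × ℤ)} (hR : reflect ⁻¹' R = R)
    (f : ℤ × ℤ → ℕ) (n : ℕ) :
    (transfer R)^[n] (f ∘ reflect) = (transfer R)^[n] f ∘ reflect := by
  induction n with
  | zero => rfl
  | succ n ih =>
    rw [Function.iterate_succ_apply', Function.iterate_succ_apply', ih, transfer_comp_reflect hR]

def cone : Set (ℤ × ℤ) := {z | -z.1 ≤ z.2 ∧ z.2 ≤ z.1}

def octant : Set (ℤ × ℤ) := {z | 0 ≤ z.2 ∧ z.2 ≤ z.1}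

def window (p q : ℤ) : Set (ℤ × ℤ) := {z | p ≤ z.2 ∧ z.2 ≤ q ∧ q ≤ z.1}

lemma reflect_preimage_cone : reflect ⁻¹' cone = cone := by
  ext z
  simp only [Set.mem_preimage, reflect_apply, cone, Set.mem_ofPred_eq]
  omega

lemma transfer_octant_window_apply {p q : ℤ} (hp : 0 ≤ p) (hpq : p ≤ q) (hpq₂ : p % 2 = q % 2)
    {w : ℤ × ℤ} (hw : w ∈ octant) (hw₁ : w.1 % 2 = w.2 % 2) (hwq : w.1 % 2 ≠ q % 2) :
    transfer octant ((window p q).indicator 1) w =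
      (window (p - 1) (q - 1)).indicator 1 w + (window (p + 1) (q - 1)).indicator 1 w
        + (window (p - 1) (q + 1)).indicator 1 w + (window (p + 1) (q + 1)).indicator 1 w := by
  have hsub : window p q ⊆ octant := fun z hz => by
    simp only [window, octant, Set.mem_ofPred_eq] at hz ⊢
    omega
  simp only [octant, Set.mem_ofPred_eq] at hw
  rw [transfer_apply, Set.indicator_indicator, Set.inter_eq_right.2 hsub]
  simp only [sum_pair (show (1 : ℤ) ≠ -1 by decide), Set.indicator_apply, window,
    Set.mem_ofPred_eq, Prod.fst_add, Prod.snd_add, Pi.one_apply]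
  split_ifs <;> omega

noncomputable def coneCount (n : ℕ) (w : ℤ × ℤ) : ℕ := (transfer cone)^[n] (Pi.single w 1) 0

noncomputable def octantCount (n : ℕ) (p q : ℤ) : ℕ :=
  (transfer octant)^[n] ((window p q).indicator 1) 0

lemma coneCount_succ {n : ℕ} {x y : ℤ} (hxy : (x, y) ∈ cone) :
    coneCount (n + 1) (x, y) = coneCount n (x - 1, y - 1) + coneCount n (x - 1, y + 1)
      + coneCount n (x + 1, y - 1) + coneCount n (x + 1, y + 1) := by
  simp only [coneCount, Function.iterate_succ_apply, transfer_single hxy, iterate_map_add,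
    Pi.add_apply, Prod.mk_sub_mk, sub_neg_eq_add]

lemma octantCount_succ {n : ℕ} {p q : ℤ} (hp : 0 ≤ p) (hpq : p ≤ q) (hpq₂ : p % 2 = q % 2)
    (hq : q % 2 ≠ n % 2) :
    octantCount (n + 1) p q = octantCount n (p - 1) (q - 1) + octantCount n (p + 1) (q - 1)
      + octantCount n (p - 1) (q + 1) + octantCount n (p + 1) (q + 1) := by
  simp only [octantCount, ← Pi.add_apply, ← iterate_map_add, Function.iterate_succ_apply]
  refine iterate_transfer_apply_congr n (by simp [octant]) fun w hw h₁ h₂ => ?_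
  simp only [Prod.fst_zero, Prod.snd_zero, zero_add] at h₁ h₂
  simp only [Pi.add_apply]
  exact transfer_octant_window_apply hp hpq hpq₂ hw (by omega) (by omega)

lemma coneCount_eq_zero {n : ℕ} {p q : ℤ} (hqp : q < p) : coneCount n (q, p) = 0 :=
  iterate_transfer_apply_eq_zero n (by simp [cone]) fun w hw =>
    Pi.single_eq_of_ne (by rintro rfl; simp [cone] at hw; omega) _

lemma octantCount_eq_zero {n : ℕ} {p q : ℤ} (hqp : q < p) : octantCount n p q = 0 :=
  iterate_transfer_apply_eq_zero n (by simp [octant]) fun w _ =>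
    Set.indicator_of_notMem (by simp [window]; omega) _

lemma coneCount_neg (n : ℕ) (x y : ℤ) : coneCount n (x, -y) = coneCount n (x, y) := by
  have h : (Pi.single (x, -y) 1 : ℤ × ℤ → ℕ) = Pi.single (x, y) 1 ∘ reflect := by
    ext z
    simp [Pi.single_apply, Prod.ext_iff, neg_eq_iff_eq_neg]
  rw [coneCount, h, iterate_transfer_comp_reflect reflect_preimage_cone]
  simp [coneCount, Prod.mk_zero_zero]

lemma octantCount_neg_one {n : ℕ} (hn : n % 2 = 1) (q : ℤ) :
    octantCount n (-1) q = octantCount n 1 q :=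
  iterate_transfer_apply_congr n (by simp [octant]) fun w hw _ h₂ => by
    simp only [octant, Set.mem_ofPred_eq, Prod.snd_zero, zero_add] at hw h₂
    simp only [Set.indicator_apply, window, Set.mem_ofPred_eq]
    split_ifs <;> omega

lemma coneCount_eq_octantCount_of_neg_one_le {n : ℕ}
    (h : ∀ p q : ℤ, 0 ≤ p → p ≤ q → p % 2 = n % 2 → q % 2 = n % 2 →
      coneCount n (q, p) = octantCount n p q)
    {p q : ℤ} (hp : -1 ≤ p) (hpn : p % 2 = n % 2) (hqn : q % 2 = n % 2) :
    coneCount n (q, p) = octantCount n p q := by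
  rcases lt_or_ge q p with hqp | hpq
  · rw [coneCount_eq_zero hqp, octantCount_eq_zero hqp]
  rcases (show p = -1 ∨ 0 ≤ p by omega) with rfl | hp
  · rw [coneCount_neg n q 1, octantCount_neg_one (by omega)]
    rcases lt_or_ge q 1 with hq | hq
    · rw [coneCount_eq_zero hq, octantCount_eq_zero hq]
    · exact h 1 q zero_le_one hq (by omega) hqn
  · exact h p q hp hpq hpn hqn

theorem coneCount_eq_octantCount (n : ℕ) :
    ∀ p q : ℤ, 0 ≤ p → p ≤ q → p % 2 = n % 2 → q % 2 = n % 2 →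
      coneCount n (q, p) = octantCount n p q := by
  induction n with
  | zero =>
    intro p q hp hpq _ _
    simp only [coneCount, octantCount, Function.iterate_zero, id, Pi.single_apply,
      Set.indicator_apply, window, Set.mem_ofPred_eq, Prod.fst_zero, Prod.snd_zero,
      Prod.ext_iff, Pi.one_apply]
    split_ifs <;> omega
  | succ n ih =>
    intro p q hp hpq hpn hqn
    have ih' := @coneCount_eq_octantCount_of_neg_one_le n ih
    rw [coneCount_succ (by simp only [cone, Set.mem_ofPred_eq]; omega),
      octantCount_succ hp hpq (by omega) (by omega),
      ih' (p := p - 1) (q := q - 1) (by omega) (by omega) (by omega),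
      ih' (p := p + 1) (q := q - 1) (by omega) (by omega) (by omega),
      ih' (p := p - 1) (q := q + 1) (by omega) (by omega) (by omega),
      ih' (p := p + 1) (q := q + 1) (by omega) (by omega) (by omega)]

lemma natCard_cone_eq_coneCount (n : ℕ) (x y : ℤ) :
    Nat.card {PQ : (Fin n → ℤ) × (Fin n → ℤ) // IsPath PQ.1 ∧ IsPath PQ.2 ∧
      (∀ a ≤ n, -ht PQ.1 a ≤ ht PQ.2 a ∧ ht PQ.2 a ≤ ht PQ.1 a) ∧
      ht PQ.1 n = x ∧ ht PQ.2 n = y} = coneCount n (x, y) := by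
  classical
  rw [coneCount, ← Set.indicator_of_mem (show (0 : ℤ × ℤ) ∈ cone by simp [cone])
    ((transfer cone)^[n] _), show (Pi.single (x, y) 1 : ℤ × ℤ → ℕ) = ({(x, y)} : Set _).indicator 1
      by simp [Set.indicator_singleton], ← natCard_isPath_pair_eq_transfer]
  exact Nat.card_congr (Equiv.subtypeEquivRight fun PQ => by simp [cone, Prod.ext_iff])

lemma natCard_octant_eq_octantCount (n : ℕ) (p q : ℤ) :
    Nat.card {PQ : (Fin n → ℤ) × (Fin n → ℤ) // IsPath PQ.1 ∧ IsPath PQ.2 ∧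
      (∀ a ≤ n, 0 ≤ ht PQ.2 a ∧ ht PQ.2 a ≤ ht PQ.1 a) ∧
      p ≤ ht PQ.2 n ∧ ht PQ.2 n ≤ q ∧ q ≤ ht PQ.1 n} = octantCount n p q := by
  rw [octantCount, ← Set.indicator_of_mem (show (0 : ℤ × ℤ) ∈ octant by simp [octant])
    ((transfer octant)^[n] _), ← natCard_isPath_pair_eq_transfer]
  exact Nat.card_congr (Equiv.subtypeEquivRight fun PQ => by simp [octant, window])

end PathPair

open PathPair

theorem stmt0_general (n : ℕ) (i j : ℤ) (hj : 0 ≤ j) (hij : j ≤ i)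
    (hpar : (i + j) % 2 = (n : ℤ) % 2) :
    Nat.card {PQ : (Fin n → ℤ) × (Fin n → ℤ) //
      IsPath PQ.1 ∧ IsPath PQ.2 ∧
      (∀ a ≤ n, -ht PQ.1 a ≤ ht PQ.2 a ∧ ht PQ.2 a ≤ ht PQ.1 a) ∧
      ht PQ.1 n = i + j ∧ ht PQ.2 n = i - j} =
    Nat.card {PQ : (Fin n → ℤ) × (Fin n → ℤ) //
      IsPath PQ.1 ∧ IsPath PQ.2 ∧
      (∀ a ≤ n, ht PQ.2 a ≤ ht PQ.1 a) ∧
      (∀ a ≤ n, 0 ≤ ht PQ.1 a) ∧ (∀ a ≤ n, 0 ≤ ht PQ.2 a) ∧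
      i - j ≤ ht PQ.2 n ∧ ht PQ.2 n ≤ i + j ∧ i + j ≤ ht PQ.1 n} := by
  rw [natCard_cone_eq_coneCount,
    coneCount_eq_octantCount n (i - j) (i + j) (by omega) (by omega) (by omega) hpar,
    ← natCard_octant_eq_octantCount]
  refine Nat.card_congr (Equiv.subtypeEquivRight fun PQ => ?_)
  constructor
  · rintro ⟨hP, hQ, hoct, hend⟩
    exact ⟨hP, hQ, fun a ha => (hoct a ha).2, fun a ha => (hoct a ha).1.trans (hoct a ha).2,
      fun a ha => (hoct a ha).1, hend⟩
  · rintro ⟨hP, hQ, hQP, -, hQ0, hend⟩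
    exact ⟨hP, hQ, fun a ha => ⟨hQ0 a ha, hQP a ha⟩, hend⟩

theorem stmt0 (n : ℕ) (i j : ℤ) (hj : 0 ≤ j) (hij : j ≤ i) (hn : i + j ≤ (n : ℤ))
    (hpar : (i + j) % 2 = (n : ℤ) % 2) :
    Nat.card {PQ : (Fin n → ℤ) × (Fin n → ℤ) //
      IsPath PQ.1 ∧ IsPath PQ.2 ∧
      (∀ a ≤ n, -ht PQ.1 a ≤ ht PQ.2 a ∧ ht PQ.2 a ≤ ht PQ.1 a) ∧
      ht PQ.1 n = i + j ∧ ht PQ.2 n = i - j} =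
    Nat.card {PQ : (Fin n → ℤ) × (Fin n → ℤ) //
      IsPath PQ.1 ∧ IsPath PQ.2 ∧
      (∀ a ≤ n, ht PQ.2 a ≤ ht PQ.1 a) ∧
      (∀ a ≤ n, 0 ≤ ht PQ.1 a) ∧ (∀ a ≤ n, 0 ≤ ht PQ.2 a) ∧
      i - j ≤ ht PQ.2 n ∧ ht PQ.2 n ≤ i + j ∧ i + j ≤ ht PQ.1 n} :=
  stmt0_general n i j hj hij hpar
end

section
/- Let n, i, j be integers with i ≥ j ≥ 0, i + j ≤ n and i + j ≡ n (mod 2), and let δ_i be the remainder of i modulo 2. Then the number of pairs (P,Q) of lattice paths of length n satisfying −P ≤ Q ≤ P, h(P) = i + j and h(Q) = i − j equals the number of pairs (P,Q) of lattice paths of length n satisfying Q ≤ P, h(P) = j + δ_i, h(Q) = −j + δ_i, and min over 0 ≤ a ≤ n of (h_a(P) + h_a(Q))/2 equal to −⌊i/2⌋. -/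
/-- The lowest height of the agreement path `(P+Q)/2`, over `0 ≤ a ≤ n`. -/
def agreeMin {n : ℕ} (P Q : Fin n → ℤ) : ℤ :=
  (Finset.range (n + 1)).inf' Finset.nonempty_range_add_one
    (fun a => (ht P a + ht Q a) / 2)

/-!
Swapping and negating both paths of a pair after time `t` leaves the gap `P - Q` untouched and
reflects the agreement path `(P + Q) / 2` about its height at `t`. Reflecting at the first visit
to a level `c ≤ 0` is therefore a bijection between noncrossing pairs with agreement endpoint `e`
that visit `c` and those with endpoint `2c - e` (André's reflection principle). As the agreement
path starts at `0` and moves by at most one per step, the pairs whose agreement minimum is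
exactly `c ≤ min 0 e` number `N (e - 2c) - N (e - 2c + 2)`, where `N f` counts the noncrossing
pairs with agreement endpoint `f`. The left-hand side is this count for `c = 0`, `e = i`, and the
right-hand side for `c = -⌊i/2⌋`, `e = i mod 2`; both equal `N i - N (i + 2)`.
-/

open Finset

abbrev PathPair (n : ℕ) := (Fin n → ℤ) × (Fin n → ℤ)

section Height

variable {n : ℕ}

lemma ht_zero (P : Fin n → ℤ) : ht P 0 = 0 := by
  simp [ht]

lemma ht_succ (P : Fin n → ℤ) (a : ℕ) :
    ht P (a + 1) = ht P a + if h : a < n then P ⟨a, h⟩ else 0 := by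
  unfold ht
  split_ifs with h
  · have hmem : (⟨a, h⟩ : Fin n) ∉ univ.filter fun l : Fin n => (l : ℕ) < a := by simp
    rw [add_comm _ (P _), ← sum_insert hmem]
    congr 1
    ext l
    simp only [Order.lt_add_one_iff, mem_filter, mem_univ, true_and, mem_insert, Fin.ext_iff]
    omega
  · rw [add_zero]
    congr 1
    ext l
    simp only [mem_filter, mem_univ, true_and]
    omega

lemma ht_neg (P : Fin n → ℤ) (a : ℕ) : ht (-P) a = -ht P a := by
  simp [ht]

lemma IsPath.neg {P : Fin n → ℤ} (hP : IsPath P) : IsPath (-P) := fun l => by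
  rcases hP l with h | h <;> simp [h]

lemma even_ht_add_ht {P Q : Fin n → ℤ} (hP : IsPath P) (hQ : IsPath Q) (a : ℕ) :
    Even (ht P a + ht Q a) := by
  induction a with
  | zero => simp [ht_zero]
  | succ a ih =>
    rw [ht_succ, ht_succ]
    split_ifs with h
    · rcases hP ⟨a, h⟩ with hp | hp <;> rcases hQ ⟨a, h⟩ with hq | hq <;>
        rw [hp, hq] <;> grind
    · simpa using ih

end Height

section Splice

variable {n : ℕ}

def splice (t : ℕ) (P R : Fin n → ℤ) : Fin n → ℤ :=
  fun l => if (l : ℕ) < t then P l else R l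

lemma IsPath.splice {P R : Fin n → ℤ} (hP : IsPath P) (hR : IsPath R) (t : ℕ) :
    IsPath (splice t P R) := fun l => by
  unfold _root_.splice
  split_ifs
  exacts [hP l, hR l]

lemma ht_splice_of_le (P R : Fin n → ℤ) {t a : ℕ} (hat : a ≤ t) :
    ht (splice t P R) a = ht P a :=
  sum_congr rfl fun _ hl => if_pos ((mem_filter.mp hl).2.trans_le hat)

lemma ht_splice_of_ge (P R : Fin n → ℤ) {t a : ℕ} (hta : t ≤ a) :
    ht (splice t P R) a = ht P t + (ht R a - ht R t) := by
  induction a, hta using Nat.le_induction with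
  | base => simp [ht_splice_of_le]
  | succ a hta ih =>
    rw [ht_succ, ht_succ R, ih]
    split_ifs
    · simp only [splice, if_neg (show ¬ a < t by omega)]
      ring
    · ring

end Splice

theorem exists_eq_of_sub_one_le_succ {g : ℕ → ℤ} (hstep : ∀ a, g a - 1 ≤ g (a + 1)) {c : ℤ}
    (h0 : c ≤ g 0) {a : ℕ} (ha : g a ≤ c) : ∃ b ≤ a, g b = c := by
  induction a with
  | zero => exact ⟨0, le_rfl, le_antisymm ha h0⟩
  | succ a ih =>
    by_cases h : g a ≤ c
    · obtain ⟨b, hb, hbc⟩ := ih h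
      exact ⟨b, hb.trans a.le_succ, hbc⟩
    · exact ⟨a + 1, le_rfl, le_antisymm ha (by linarith [hstep a])⟩

section Agreement

variable {n : ℕ}

def agreeHt (x : PathPair n) (a : ℕ) : ℤ := (ht x.1 a + ht x.2 a) / 2

def HitsLevel (x : PathPair n) (c : ℤ) : Prop := ∃ a ≤ n, agreeHt x a = c

lemma agreeHt_zero (x : PathPair n) : agreeHt x 0 = 0 := by
  simp [agreeHt, ht_zero]

lemma hitsLevel_zero (x : PathPair n) : HitsLevel x 0 :=
  ⟨0, n.zero_le, agreeHt_zero x⟩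

lemma two_mul_agreeHt {x : PathPair n} (hP : IsPath x.1) (hQ : IsPath x.2) (a : ℕ) :
    2 * agreeHt x a = ht x.1 a + ht x.2 a :=
  Int.two_mul_ediv_two_of_even (even_ht_add_ht hP hQ a)

lemma agreeHt_sub_one_le_succ {x : PathPair n} (hP : IsPath x.1) (hQ : IsPath x.2) (a : ℕ) :
    agreeHt x a - 1 ≤ agreeHt x (a + 1) := by
  have h := two_mul_agreeHt hP hQ a
  have h' := two_mul_agreeHt hP hQ (a + 1)
  rw [ht_succ, ht_succ] at h'
  split_ifs at h' with ha
  · rcases hP ⟨a, ha⟩ with hp | hp <;> rcases hQ ⟨a, ha⟩ with hq | hq <;> omega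
  · omega

lemma hitsLevel_of_agreeHt_le {x : PathPair n} (hP : IsPath x.1) (hQ : IsPath x.2) {c : ℤ}
    (hc : c ≤ 0) {a : ℕ} (ha : a ≤ n) (hac : agreeHt x a ≤ c) : HitsLevel x c := by
  obtain ⟨b, hb, hbc⟩ := exists_eq_of_sub_one_le_succ (agreeHt_sub_one_le_succ hP hQ)
    (by rwa [agreeHt_zero]) hac
  exact ⟨b, hb.trans ha, hbc⟩

lemma HitsLevel.mono {x : PathPair n} (hP : IsPath x.1) (hQ : IsPath x.2) {c c' : ℤ}
    (h : HitsLevel x c) (hcc' : c ≤ c') (hc' : c' ≤ 0) : HitsLevel x c' := by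
  obtain ⟨a, ha, rfl⟩ := h
  exact hitsLevel_of_agreeHt_le hP hQ hc' ha hcc'

lemma forall_le_agreeHt_iff {x : PathPair n} (hP : IsPath x.1) (hQ : IsPath x.2) {c : ℤ}
    (hc : c ≤ 0) : (∀ a ≤ n, c ≤ agreeHt x a) ↔ ¬ HitsLevel x (c - 1) := by
  refine ⟨fun h ⟨a, ha, hac⟩ => by linarith [h a ha], fun h a ha => ?_⟩
  by_contra! hlt
  exact h (hitsLevel_of_agreeHt_le hP hQ (by omega) ha (by omega))

lemma agreeMin_eq_iff (x : PathPair n) (v : ℤ) :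
    agreeMin x.1 x.2 = v ↔ (∀ a ≤ n, v ≤ agreeHt x a) ∧ HitsLevel x v := by
  constructor
  · rintro rfl
    obtain ⟨a, ha, hmin⟩ := exists_mem_eq_inf' nonempty_range_add_one (agreeHt x)
    exact ⟨fun b hb => inf'_le _ (mem_range_succ_iff.mpr hb), a, mem_range_succ_iff.mp ha,
      hmin.symm⟩
  · rintro ⟨hle, a, ha, rfl⟩
    exact le_antisymm (inf'_le _ (mem_range_succ_iff.mpr ha))
      (le_inf' _ _ fun b hb => hle b (mem_range_succ_iff.mp hb))

lemma neg_le_ht_and_ht_le_iff (x : PathPair n) :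
    (∀ a ≤ n, -ht x.1 a ≤ ht x.2 a ∧ ht x.2 a ≤ ht x.1 a) ↔
      (∀ a ≤ n, ht x.2 a ≤ ht x.1 a) ∧ agreeMin x.1 x.2 = 0 := by
  simp only [agreeMin_eq_iff, hitsLevel_zero, and_true, agreeHt]
  refine ⟨fun h => ⟨fun a ha => (h a ha).2, fun a ha => ?_⟩, fun h a ha => ⟨?_, h.1 a ha⟩⟩
  · have := (h a ha).1
    omega
  · have := h.2 a ha
    omega

end Agreement

section Reflection

variable {n : ℕ}

def reflectFrom (t : ℕ) (x : PathPair n) : PathPair n :=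
  (splice t x.1 (-x.2), splice t x.2 (-x.1))

lemma reflectFrom_reflectFrom (t : ℕ) (x : PathPair n) : reflectFrom t (reflectFrom t x) = x := by
  ext l <;> simp only [reflectFrom, splice, Pi.neg_apply] <;> split_ifs <;> simp

lemma isPath_reflectFrom {x : PathPair n} (hP : IsPath x.1) (hQ : IsPath x.2) (t : ℕ) :
    IsPath (reflectFrom t x).1 ∧ IsPath (reflectFrom t x).2 :=
  ⟨hP.splice hQ.neg t, hQ.splice hP.neg t⟩

lemma ht_reflectFrom_of_le (x : PathPair n) {t a : ℕ} (hat : a ≤ t) :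
    ht (reflectFrom t x).1 a = ht x.1 a ∧ ht (reflectFrom t x).2 a = ht x.2 a :=
  ⟨ht_splice_of_le _ _ hat, ht_splice_of_le _ _ hat⟩

lemma ht_reflectFrom_of_ge (x : PathPair n) {t a : ℕ} (hta : t ≤ a) :
    ht (reflectFrom t x).1 a = ht x.1 t - (ht x.2 a - ht x.2 t) ∧
      ht (reflectFrom t x).2 a = ht x.2 t - (ht x.1 a - ht x.1 t) := by
  simp only [reflectFrom, ht_splice_of_ge _ _ hta, ht_neg]
  constructor <;> ring

lemma ht_sub_ht_reflectFrom (x : PathPair n) (t a : ℕ) :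
    ht (reflectFrom t x).1 a - ht (reflectFrom t x).2 a = ht x.1 a - ht x.2 a := by
  rcases le_total a t with hat | hta
  · obtain ⟨h1, h2⟩ := ht_reflectFrom_of_le x hat
    rw [h1, h2]
  · obtain ⟨h1, h2⟩ := ht_reflectFrom_of_ge x hta
    rw [h1, h2]
    ring

lemma agreeHt_reflectFrom_of_le (x : PathPair n) {t a : ℕ} (hat : a ≤ t) :
    agreeHt (reflectFrom t x) a = agreeHt x a := by
  obtain ⟨h1, h2⟩ := ht_reflectFrom_of_le x hat
  rw [agreeHt, agreeHt, h1, h2]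

open Classical in
noncomputable def reflectFirstHit (c : ℤ) (x : PathPair n) : PathPair n :=
  if h : HitsLevel x c then reflectFrom (Nat.find h) x else x

lemma reflectFirstHit_of_hitsLevel {c : ℤ} {x : PathPair n} (h : HitsLevel x c) :
    reflectFirstHit c x = reflectFrom (Nat.find h) x := by
  rw [reflectFirstHit, dif_pos h]

lemma reflectFirstHit_involutive (c : ℤ) : Function.Involutive (reflectFirstHit (n := n) c) := by
  intro x
  by_cases h : HitsLevel x c
  · obtain ⟨htn, htc⟩ := Nat.find_spec h
    have hspec : Nat.find h ≤ n ∧ agreeHt (reflectFrom (Nat.find h) x) (Nat.find h) = c :=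
      ⟨htn, by rwa [agreeHt_reflectFrom_of_le x le_rfl]⟩
    have h' : HitsLevel (reflectFrom (Nat.find h) x) c := ⟨_, hspec⟩
    have hfind : Nat.find h' = Nat.find h := (Nat.find_eq_iff h').mpr
      ⟨hspec, fun b hb ⟨hbn, hbc⟩ =>
        Nat.find_min h hb ⟨hbn, by rwa [agreeHt_reflectFrom_of_le x hb.le] at hbc⟩⟩
    rw [reflectFirstHit_of_hitsLevel h, reflectFirstHit_of_hitsLevel h', hfind,
      reflectFrom_reflectFrom]
  · simp [reflectFirstHit, h]

end Reflection

lemma Nat.card_subtype_and_add_card_subtype_and_not {α : Type*} (p q : α → Prop)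
    (hp : {x | p x}.Finite) :
    Nat.card {x // p x ∧ q x} + Nat.card {x // p x ∧ ¬ q x} = Nat.card {x // p x} :=
  Set.ncard_inter_add_ncard_sdiff_eq_ncard {x | p x} {x | q x} hp

section Counting

variable {n : ℕ}

def IsNoncrossing (j e : ℤ) (x : PathPair n) : Prop :=
  IsPath x.1 ∧ IsPath x.2 ∧ (∀ a ≤ n, ht x.2 a ≤ ht x.1 a) ∧
    ht x.1 n = e + j ∧ ht x.2 n = e - j

lemma finite_setOf_isNoncrossing (j e : ℤ) : {x : PathPair n | IsNoncrossing j e x}.Finite := by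
  have hpaths : (Set.univ.pi fun _ : Fin n => ({1, -1} : Set ℤ)).Finite :=
    Set.Finite.pi fun _ => Set.toFinite _
  refine (hpaths.prod hpaths).subset fun x hx => ⟨fun l _ => ?_, fun l _ => ?_⟩
  exacts [hx.1 l, hx.2.1 l]

lemma IsNoncrossing.hitsLevel {j e c : ℤ} {x : PathPair n} (hx : IsNoncrossing j e x)
    (hc : c ≤ 0) (hec : e ≤ c) : HitsLevel x c := by
  obtain ⟨hP, hQ, -, h1, h2⟩ := hx
  have := two_mul_agreeHt hP hQ n
  exact hitsLevel_of_agreeHt_le hP hQ hc le_rfl (by omega)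

lemma IsNoncrossing.reflectFirstHit {j e c : ℤ} {x : PathPair n} (hx : IsNoncrossing j e x)
    (h : HitsLevel x c) :
    IsNoncrossing j (2 * c - e) (reflectFirstHit c x) ∧ HitsLevel (reflectFirstHit c x) c := by
  obtain ⟨hP, hQ, hle, h1, h2⟩ := hx
  obtain ⟨htn, htc⟩ := Nat.find_spec h
  have hsum := two_mul_agreeHt hP hQ (Nat.find h)
  obtain ⟨hP', hQ'⟩ := isPath_reflectFrom hP hQ (Nat.find h)
  obtain ⟨hn1, hn2⟩ := ht_reflectFrom_of_ge x htn
  have hdiff := ht_sub_ht_reflectFrom x (Nat.find h)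
  rw [reflectFirstHit_of_hitsLevel h]
  exact ⟨⟨hP', hQ', fun a ha => by linarith [hdiff a, hle a ha], by omega, by omega⟩,
    _, htn, by rwa [agreeHt_reflectFrom_of_le x le_rfl]⟩

theorem card_isNoncrossing_hitsLevel_reflect (j c e : ℤ) :
    Nat.card {x : PathPair n // IsNoncrossing j e x ∧ HitsLevel x c} =
      Nat.card {x : PathPair n // IsNoncrossing j (2 * c - e) x ∧ HitsLevel x c} :=
  Nat.card_congr <| (reflectFirstHit_involutive c).toPerm.subtypeEquiv fun x =>
    ⟨fun ⟨hx, h⟩ => hx.reflectFirstHit h, fun ⟨hx, h⟩ => by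
      simpa [reflectFirstHit_involutive c x] using hx.reflectFirstHit h⟩

lemma card_isNoncrossing_neg (j e : ℤ) :
    Nat.card {x : PathPair n // IsNoncrossing j (-e) x} =
      Nat.card {x : PathPair n // IsNoncrossing j e x} := by
  have hits_zero (f : ℤ) : Nat.card {x : PathPair n // IsNoncrossing j f x ∧ HitsLevel x 0} =
      Nat.card {x : PathPair n // IsNoncrossing j f x} :=
    Nat.card_congr <| Equiv.subtypeEquivRight fun x => and_iff_left (hitsLevel_zero x)
  rw [← hits_zero, ← hits_zero, card_isNoncrossing_hitsLevel_reflect j 0 e, mul_zero, zero_sub]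

lemma card_isNoncrossing_hitsLevel {j c e : ℤ} (hc : c ≤ 0) (hce : c ≤ e) :
    Nat.card {x : PathPair n // IsNoncrossing j e x ∧ HitsLevel x c} =
      Nat.card {x : PathPair n // IsNoncrossing j (e - 2 * c) x} := by
  rw [card_isNoncrossing_hitsLevel_reflect, ← card_isNoncrossing_neg, neg_sub]
  exact Nat.card_congr <| Equiv.subtypeEquivRight fun x =>
    and_iff_left_of_imp fun hx => hx.hitsLevel hc (by omega)

theorem card_isNoncrossing_agreeMin {j c e : ℤ} (hc : c ≤ 0) (hce : c ≤ e) :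
    Nat.card {x : PathPair n // IsNoncrossing j e x ∧ agreeMin x.1 x.2 = c} =
      Nat.card {x : PathPair n // IsNoncrossing j (e - 2 * c) x} -
        Nat.card {x : PathPair n // IsNoncrossing j (e - 2 * c + 2) x} := by
  have hmin : ∀ x : PathPair n, IsNoncrossing j e x →
      (agreeMin x.1 x.2 = c ↔ HitsLevel x c ∧ ¬ HitsLevel x (c - 1)) := fun x hx => by
    rw [agreeMin_eq_iff, forall_le_agreeHt_iff hx.1 hx.2.1 hc, and_comm]
  have hsplit := Nat.card_subtype_and_add_card_subtype_and_not
    (fun x : PathPair n => IsNoncrossing j e x ∧ HitsLevel x c) (fun x => HitsLevel x (c - 1))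
    ((finite_setOf_isNoncrossing j e).subset fun _ hx => hx.1)
  have hlower : Nat.card {x : PathPair n // (IsNoncrossing j e x ∧ HitsLevel x c) ∧
      HitsLevel x (c - 1)} =
        Nat.card {x : PathPair n // IsNoncrossing j e x ∧ HitsLevel x (c - 1)} :=
    Nat.card_congr <| Equiv.subtypeEquivRight fun x => ⟨fun h => ⟨h.1.1, h.2⟩,
      fun h => ⟨⟨h.1, h.2.mono h.1.1 h.1.2.1 (by omega) hc⟩, h.2⟩⟩
  rw [hlower, card_isNoncrossing_hitsLevel hc hce,
    card_isNoncrossing_hitsLevel (by omega) (by omega)] at hsplit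
  rw [show e - 2 * c + 2 = e - 2 * (c - 1) by ring, ← hsplit, Nat.add_sub_cancel_left]
  exact Nat.card_congr <| Equiv.subtypeEquivRight fun x =>
    ⟨fun ⟨hx, hm⟩ => and_assoc.mpr ⟨hx, (hmin x hx).mp hm⟩,
      fun ⟨⟨hx, h⟩, h'⟩ => ⟨hx, (hmin x hx).mpr ⟨h, h'⟩⟩⟩

end Counting

theorem stmt1_general (n : ℕ) (i j : ℤ) (hj : 0 ≤ j) (hij : j ≤ i) :
    Nat.card {PQ : (Fin n → ℤ) × (Fin n → ℤ) //
      IsPath PQ.1 ∧ IsPath PQ.2 ∧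
      (∀ a ≤ n, -ht PQ.1 a ≤ ht PQ.2 a ∧ ht PQ.2 a ≤ ht PQ.1 a) ∧
      ht PQ.1 n = i + j ∧ ht PQ.2 n = i - j} =
    Nat.card {PQ : (Fin n → ℤ) × (Fin n → ℤ) //
      IsPath PQ.1 ∧ IsPath PQ.2 ∧
      (∀ a ≤ n, ht PQ.2 a ≤ ht PQ.1 a) ∧
      ht PQ.1 n = j + i % 2 ∧ ht PQ.2 n = -j + i % 2 ∧
      agreeMin PQ.1 PQ.2 = -(i / 2)} := by
  have hi : 0 ≤ i := hj.trans hij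
  calc _ = Nat.card {x : PathPair n // IsNoncrossing j i x ∧ agreeMin x.1 x.2 = 0} :=
        Nat.card_congr <| Equiv.subtypeEquivRight fun x => by
          rw [neg_le_ht_and_ht_le_iff]
          unfold IsNoncrossing
          tauto
    _ = Nat.card {x : PathPair n // IsNoncrossing j (i % 2) x ∧ agreeMin x.1 x.2 = -(i / 2)} := by
        have hend : i % 2 - 2 * -(i / 2) = i - 2 * 0 := by omega
        rw [card_isNoncrossing_agreeMin le_rfl hi,
          card_isNoncrossing_agreeMin (by omega) (by omega), hend]
    _ = _ :=
        Nat.card_congr <| Equiv.subtypeEquivRight fun x => by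
          unfold IsNoncrossing
          rw [add_comm j, neg_add_eq_sub]
          tauto

theorem stmt1 (n : ℕ) (i j : ℤ) (hj : 0 ≤ j) (hij : j ≤ i) (hn : i + j ≤ (n : ℤ))
    (hpar : (i + j) % 2 = (n : ℤ) % 2) :
    Nat.card {PQ : (Fin n → ℤ) × (Fin n → ℤ) //
      IsPath PQ.1 ∧ IsPath PQ.2 ∧
      (∀ a ≤ n, -ht PQ.1 a ≤ ht PQ.2 a ∧ ht PQ.2 a ≤ ht PQ.1 a) ∧
      ht PQ.1 n = i + j ∧ ht PQ.2 n = i - j} =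
    Nat.card {PQ : (Fin n → ℤ) × (Fin n → ℤ) //
      IsPath PQ.1 ∧ IsPath PQ.2 ∧
      (∀ a ≤ n, ht PQ.2 a ≤ ht PQ.1 a) ∧
      ht PQ.1 n = j + i % 2 ∧ ht PQ.2 n = -j + i % 2 ∧
      agreeMin PQ.1 PQ.2 = -(i / 2)} :=
  stmt1_general n i j hj hij
end

section
/- Fix n ≥ 0 and r ≥ 0. The number of lattice paths Q of length n with h(Q) ≥ 0 having exactly r lower returns (steps +1 whose endpoint has height 0, i.e., indices l with h_{l−1}(Q) = −1 and h_l(Q) = 0) equals the number of lattice paths Q' of length n with Q' ≥ 0 and h(Q') ≥ 2r. -/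
namespace Stmt4Aux

variable {n : ℕ}

lemma ht_zero (Q : Fin n → ℤ) : ht Q 0 = 0 := by simp [ht]

lemma ht_succ (Q : Fin n → ℤ) {a : ℕ} (ha : a < n) :
    ht Q (a + 1) = ht Q a + Q ⟨a, ha⟩ := by
  unfold ht
  rw [show (Finset.univ.filter (fun l : Fin n => (l : ℕ) < a + 1))
      = insert (⟨a, ha⟩ : Fin n) (Finset.univ.filter (fun l : Fin n => (l : ℕ) < a)) by
    ext l
    simp only [Finset.mem_filter, Finset.mem_univ, true_and, Finset.mem_insert, Fin.ext_iff]
    omega]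
  rw [Finset.sum_insert (by simp)]
  ring

/-- Φ : flip every step whose ending height is negative. -/
def flipNeg (Q : Fin n → ℤ) : Fin n → ℤ :=
  fun l => if ht Q ((l : ℕ) + 1) < 0 then -Q l else Q l

/-- number of lower returns among steps of index < a -/
def retCnt (Q : Fin n → ℤ) (a : ℕ) : ℕ :=
  (Finset.univ.filter (fun l : Fin n =>
    (l : ℕ) < a ∧ Q l = 1 ∧ ht Q ((l : ℕ) + 1) = 0)).card

lemma retCnt_zero (Q : Fin n → ℤ) : retCnt Q 0 = 0 := by simp [retCnt]

lemma retCnt_succ (Q : Fin n → ℤ) {a : ℕ} (ha : a < n) :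
    retCnt Q (a + 1) = retCnt Q a +
      (if (Q ⟨a, ha⟩ = 1 ∧ ht Q (a + 1) = 0) then 1 else 0) := by
  unfold retCnt
  by_cases h : (Q ⟨a, ha⟩ = 1 ∧ ht Q (a + 1) = 0)
  · rw [if_pos h]
    rw [show (Finset.univ.filter (fun l : Fin n =>
        (l : ℕ) < a + 1 ∧ Q l = 1 ∧ ht Q ((l : ℕ) + 1) = 0))
        = insert (⟨a, ha⟩ : Fin n) (Finset.univ.filter (fun l : Fin n =>
          (l : ℕ) < a ∧ Q l = 1 ∧ ht Q ((l : ℕ) + 1) = 0)) by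
      ext l
      simp only [Finset.mem_filter, Finset.mem_univ, true_and, Finset.mem_insert, Fin.ext_iff]
      constructor
      · rintro ⟨hl, hrest⟩
        rcases Nat.lt_succ_iff_lt_or_eq.mp hl with h' | h'
        · exact Or.inr ⟨h', hrest⟩
        · exact Or.inl h'
      · rintro (h' | ⟨h', hrest⟩)
        · subst h'; exact ⟨Nat.lt_succ_self _, h⟩
        · exact ⟨Nat.lt_succ_of_lt h', hrest⟩]
    rw [Finset.card_insert_of_notMem (by simp)]
  · rw [if_neg h]
    have : (Finset.univ.filter (fun l : Fin n =>
        (l : ℕ) < a + 1 ∧ Q l = 1 ∧ ht Q ((l : ℕ) + 1) = 0))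
        = (Finset.univ.filter (fun l : Fin n =>
          (l : ℕ) < a ∧ Q l = 1 ∧ ht Q ((l : ℕ) + 1) = 0)) := by
      ext l
      simp only [Finset.mem_filter, Finset.mem_univ, true_and]
      constructor
      · rintro ⟨hl, hrest⟩
        rcases Nat.lt_succ_iff_lt_or_eq.mp hl with h' | h'
        · exact ⟨h', hrest⟩
        · exfalso; apply h
          have hl2 : l = (⟨a, ha⟩ : Fin n) := Fin.ext h'
          rw [hl2] at hrest; exact hrest
      · rintro ⟨hl, hrest⟩; exact ⟨Nat.lt_succ_of_lt hl, hrest⟩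
    rw [this]; omega

lemma retCnt_n (Q : Fin n → ℤ) :
    retCnt Q n = (Finset.univ.filter (fun l : Fin n =>
      Q l = 1 ∧ ht Q ((l : ℕ) + 1) = 0)).card := by
  unfold retCnt
  congr 1
  apply Finset.filter_congr
  intro x _
  simp [x.isLt]

/-- heights of the forward map Φ -/
lemma flipNeg_ht (Q : Fin n → ℤ) (hQ : IsPath Q) :
    ∀ a ≤ n, ht (flipNeg Q) a = |ht Q a| + 2 * retCnt Q a := by
  intro a
  induction a with
  | zero => intro _; simp [ht_zero, retCnt_zero]
  | succ a ih =>
    intro ha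
    have ha' : a < n := ha
    have h1 : ht (flipNeg Q) (a + 1) = ht (flipNeg Q) a +
        (if ht Q (a + 1) < 0 then -Q ⟨a, ha'⟩ else Q ⟨a, ha'⟩) := by
      rw [ht_succ _ ha']; rfl
    have h2 : ht Q (a + 1) = ht Q a + Q ⟨a, ha'⟩ := ht_succ _ ha'
    have h3 := retCnt_succ Q ha'
    have h4 := ih (le_of_lt ha')
    have h5 := hQ ⟨a, ha'⟩
    rcases abs_cases (ht Q a) with ⟨e1, e2⟩ | ⟨e1, e2⟩ <;>
      rcases abs_cases (ht Q (a + 1)) with ⟨f1, f2⟩ | ⟨f1, f2⟩ <;>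
      split_ifs at h1 h3 <;> omega


lemma flipNeg_isPath (Q : Fin n → ℤ) (hQ : IsPath Q) : IsPath (flipNeg Q) := by
  intro l
  rcases hQ l with h | h <;> unfold flipNeg <;> split_ifs <;> simp [h]

lemma flipNeg_mem (r : ℕ) (Q : Fin n → ℤ) (hQ : IsPath Q) (hend : 0 ≤ ht Q n)
    (hr : retCnt Q n = r) :
    IsPath (flipNeg Q) ∧ (∀ a ≤ n, 0 ≤ ht (flipNeg Q) a) ∧
      2 * (r : ℤ) ≤ ht (flipNeg Q) n := by
  refine ⟨flipNeg_isPath Q hQ, ?_, ?_⟩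
  · intro a ha
    rw [flipNeg_ht Q hQ a ha]
    have := abs_nonneg (ht Q a)
    omega
  · rw [flipNeg_ht Q hQ n le_rfl, abs_of_nonneg hend, hr]
    omega

lemma flipNeg_inj (Q1 Q2 : Fin n → ℤ) (h1 : IsPath Q1) (h2 : IsPath Q2)
    (e1 : 0 ≤ ht Q1 n) (e2 : 0 ≤ ht Q2 n) (hc : retCnt Q1 n = retCnt Q2 n)
    (hfe : flipNeg Q1 = flipNeg Q2) : Q1 = Q2 := by
  have hn : ht Q1 n = ht Q2 n := by
    have a1 := flipNeg_ht Q1 h1 n le_rfl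
    have a2 := flipNeg_ht Q2 h2 n le_rfl
    rw [hfe] at a1
    rw [abs_of_nonneg e1] at a1
    rw [abs_of_nonneg e2] at a2
    omega
  have key : ∀ k, k ≤ n → ht Q1 (n - k) = ht Q2 (n - k) := by
    intro k
    induction k with
    | zero => intro _; simpa using hn
    | succ k ih =>
      intro hk
      have hk' : k ≤ n := le_of_lt hk
      have ha : n - (k + 1) < n := by omega
      have hsucc : n - (k + 1) + 1 = n - k := by omega
      have hH : ht Q1 (n - (k+1) + 1) = ht Q2 (n - (k+1) + 1) := by
        rw [hsucc]; exact ih hk'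
      have hfeq : flipNeg Q1 ⟨n - (k+1), ha⟩ = flipNeg Q2 ⟨n - (k+1), ha⟩ := by rw [hfe]
      unfold flipNeg at hfeq
      simp only at hfeq
      rw [hH] at hfeq
      have hs1 : ht Q1 (n - (k+1) + 1) = ht Q1 (n - (k+1)) + Q1 ⟨n - (k+1), ha⟩ :=
        ht_succ _ ha
      have hs2 : ht Q2 (n - (k+1) + 1) = ht Q2 (n - (k+1)) + Q2 ⟨n - (k+1), ha⟩ :=
        ht_succ _ ha
      split_ifs at hfeq <;> omega
  have hts : ∀ a, a ≤ n → ht Q1 a = ht Q2 a := by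
    intro a ha
    have := key (n - a) (by omega)
    rwa [show n - (n - a) = a by omega] at this
  funext l
  have hl := l.isLt
  have hs1 : ht Q1 ((l : ℕ) + 1) = ht Q1 (l : ℕ) + Q1 ⟨(l : ℕ), hl⟩ := ht_succ _ hl
  have hs2 : ht Q2 ((l : ℕ) + 1) = ht Q2 (l : ℕ) + Q2 ⟨(l : ℕ), hl⟩ := ht_succ _ hl
  have e3 := hts (l : ℕ) (le_of_lt hl)
  have e4 := hts ((l : ℕ) + 1) hl
  have : Q1 ⟨(l : ℕ), hl⟩ = Q2 ⟨(l : ℕ), hl⟩ := by omega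
  simpa using this


/-- minimum of heights over positions in [min p n, n] -/
def futMin (Q' : Fin n → ℤ) (p : ℕ) : ℤ :=
  (Finset.Icc (min p n) n).inf' ⟨n, by simp [Finset.mem_Icc]⟩ (ht Q')

def mu (r : ℕ) (Q' : Fin n → ℤ) (p : ℕ) : ℤ := min (futMin Q' p) (2 * (r : ℤ))

/-- Ψ : flip every step l with mu (l+1) odd -/
def unflip (r : ℕ) (Q' : Fin n → ℤ) : Fin n → ℤ :=
  fun l => if Odd (mu r Q' ((l : ℕ) + 1)) then -Q' l else Q' l

lemma futMin_le (Q' : Fin n → ℤ) {p a : ℕ} (hpa : p ≤ a) (ha : a ≤ n) :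
    futMin Q' p ≤ ht Q' a :=
  Finset.inf'_le _ (by simp [Finset.mem_Icc]; omega)

lemma futMin_exists (Q' : Fin n → ℤ) {p : ℕ} (hp : p ≤ n) :
    ∃ a, p ≤ a ∧ a ≤ n ∧ futMin Q' p = ht Q' a := by
  obtain ⟨a, hmem, he⟩ := Finset.exists_mem_eq_inf'
    (⟨n, by simp [Finset.mem_Icc]⟩ : (Finset.Icc (min p n) n).Nonempty) (ht Q')
  simp only [Finset.mem_Icc] at hmem
  exact ⟨a, by omega, hmem.2, he⟩

lemma futMin_mono (Q' : Fin n → ℤ) {p q : ℕ} (hpq : p ≤ q) (hq : q ≤ n) :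
    futMin Q' p ≤ futMin Q' q := by
  obtain ⟨a, h1, h2, h3⟩ := futMin_exists Q' hq
  rw [h3]
  exact futMin_le Q' (le_trans hpq h1) h2

lemma futMin_succ_le (Q' : Fin n → ℤ) (hQ : IsPath Q') {p : ℕ} (hp : p < n) :
    futMin Q' (p + 1) ≤ futMin Q' p + 1 := by
  obtain ⟨a, h1, h2, h3⟩ := futMin_exists Q' (le_of_lt hp)
  rcases Nat.eq_or_lt_of_le h1 with he | hlt
  · subst he
    have hs : ht Q' (p + 1) = ht Q' p + Q' ⟨p, hp⟩ := ht_succ _ hp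
    have := futMin_le Q' (le_refl (p + 1)) hp
    rcases hQ ⟨p, hp⟩ with h | h <;> omega
  · have := futMin_le Q' (a := a) (p := p + 1) hlt h2
    omega

lemma futMin_nonneg (Q' : Fin n → ℤ) (hnn : ∀ a ≤ n, 0 ≤ ht Q' a) {p : ℕ} (hp : p ≤ n) :
    0 ≤ futMin Q' p := by
  obtain ⟨a, _, h2, h3⟩ := futMin_exists Q' hp
  rw [h3]; exact hnn a h2

lemma futMin_zero (Q' : Fin n → ℤ) (hnn : ∀ a ≤ n, 0 ≤ ht Q' a) : futMin Q' 0 = 0 := by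
  have h1 := futMin_le Q' (p := 0) (a := 0) le_rfl (Nat.zero_le n)
  have h2 := futMin_nonneg Q' hnn (Nat.zero_le n)
  rw [ht_zero] at h1
  omega

lemma futMin_last (Q' : Fin n → ℤ) : futMin Q' n = ht Q' n := by
  have h1 := futMin_le Q' (p := n) (a := n) le_rfl le_rfl
  obtain ⟨a, ha1, ha2, ha3⟩ := futMin_exists Q' (le_refl n)
  have : a = n := by omega
  rw [this] at ha3
  omega


section Mu

variable (r : ℕ) (Q' : Fin n → ℤ)

lemma mu_mono {p q : ℕ} (hpq : p ≤ q) (hq : q ≤ n) : mu r Q' p ≤ mu r Q' q := by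
  have := futMin_mono Q' hpq hq
  unfold mu; omega

lemma mu_succ_le (hQ : IsPath Q') {p : ℕ} (hp : p < n) :
    mu r Q' (p + 1) ≤ mu r Q' p + 1 := by
  have := futMin_succ_le Q' hQ hp
  unfold mu; omega

lemma mu_zero (hnn : ∀ a ≤ n, 0 ≤ ht Q' a) : mu r Q' 0 = 0 := by
  have := futMin_zero Q' hnn
  unfold mu; omega

lemma mu_last (hend : 2 * (r : ℤ) ≤ ht Q' n) : mu r Q' n = 2 * (r : ℤ) := by
  have := futMin_last Q'
  unfold mu; omega

lemma mu_nonneg (hnn : ∀ a ≤ n, 0 ≤ ht Q' a) {p : ℕ} (hp : p ≤ n) : 0 ≤ mu r Q' p := by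
  have := futMin_nonneg Q' hnn hp
  unfold mu; omega

lemma mu_le_ht {p : ℕ} (hp : p ≤ n) : mu r Q' p ≤ ht Q' p := by
  have := futMin_le Q' (le_refl p) hp
  unfold mu; omega

lemma mu_inc {p : ℕ} (hp : p < n) (hi : mu r Q' (p + 1) = mu r Q' p + 1) :
    ht Q' p = mu r Q' p := by
  have h2r : mu r Q' p + 1 ≤ 2 * (r : ℤ) := by
    have : mu r Q' (p + 1) ≤ 2 * (r : ℤ) := min_le_right _ _
    omega
  have hfm : mu r Q' p = futMin Q' p := by
    unfold mu at *
    omega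
  have hlt : futMin Q' p < futMin Q' (p + 1) := by
    have h1 : mu r Q' (p + 1) ≤ futMin Q' (p + 1) := by unfold mu at *; omega
    omega
  obtain ⟨a, ha1, ha2, ha3⟩ := futMin_exists Q' (le_of_lt hp)
  have : a = p := by
    by_contra hne
    have : p + 1 ≤ a := by omega
    have := futMin_le Q' this ha2
    omega
  subst this
  omega

/-- the key height formula for Ψ -/
lemma unflip_ht (hQ : IsPath Q') (hnn : ∀ a ≤ n, 0 ≤ ht Q' a) :
    ∀ a ≤ n, ht (unflip r Q') a =
      if Odd (mu r Q' a) then mu r Q' a - 1 - ht Q' a else ht Q' a - mu r Q' a := by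
  intro a
  induction a with
  | zero =>
    intro _
    rw [ht_zero, ht_zero, mu_zero r Q' hnn]
    norm_num
  | succ a ih =>
    intro ha
    have ha' : a < n := ha
    have ih' := ih (le_of_lt ha')
    have h1 : ht (unflip r Q') (a + 1) = ht (unflip r Q') a +
        (if Odd (mu r Q' (a + 1)) then -Q' ⟨a, ha'⟩ else Q' ⟨a, ha'⟩) := by
      rw [ht_succ _ ha']; rfl
    have h2 : ht Q' (a + 1) = ht Q' a + Q' ⟨a, ha'⟩ := ht_succ _ ha'
    have hm1 : mu r Q' a ≤ mu r Q' (a + 1) := mu_mono r Q' (Nat.le_succ a) ha'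
    have hm2 := mu_succ_le r Q' hQ ha'
    have hq := hQ ⟨a, ha'⟩
    rcases show mu r Q' (a + 1) = mu r Q' a ∨ mu r Q' (a + 1) = mu r Q' a + 1 by omega
      with hc | hc
    · simp only [Int.odd_iff] at ih' h1 ⊢
      split_ifs at ih' h1 ⊢ <;> omega
    · have hpa := mu_inc r Q' ha' hc
      simp only [Int.odd_iff] at ih' h1 ⊢
      split_ifs at ih' h1 ⊢ <;> omega


lemma unflip_isPath (hQ : IsPath Q') : IsPath (unflip r Q') := by
  intro l
  rcases hQ l with h | h <;> unfold unflip <;> split_ifs <;> simp [h]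

lemma not_odd_two_mul (r : ℕ) : ¬ Odd (2 * (r : ℤ)) := by
  simp [Int.even_iff, Int.odd_iff, Int.mul_emod_right]

lemma flipNeg_unflip (hQ : IsPath Q') (hnn : ∀ a ≤ n, 0 ≤ ht Q' a) :
    flipNeg (unflip r Q') = Q' := by
  funext l
  have hl := l.isLt
  have hform := unflip_ht r Q' hQ hnn ((l : ℕ) + 1) hl
  have hge : mu r Q' ((l : ℕ) + 1) ≤ ht Q' ((l : ℕ) + 1) := mu_le_ht r Q' hl
  show (if ht (unflip r Q') ((l : ℕ) + 1) < 0 then -(unflip r Q') l else (unflip r Q') l) = Q' l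
  have hu : unflip r Q' l = if Odd (mu r Q' ((l : ℕ) + 1)) then -Q' l else Q' l := rfl
  by_cases hodd : Odd (mu r Q' ((l : ℕ) + 1))
  · rw [if_pos hodd] at hu
    rw [if_pos, hu, neg_neg]
    rw [hform, if_pos hodd]
    omega
  · rw [if_neg hodd] at hu
    rw [if_neg, hu]
    rw [hform, if_neg hodd]
    omega

lemma unflip_end (hQ : IsPath Q') (hnn : ∀ a ≤ n, 0 ≤ ht Q' a)
    (hend : 2 * (r : ℤ) ≤ ht Q' n) : 0 ≤ ht (unflip r Q') n ∧
      ht (unflip r Q') n = ht Q' n - 2 * (r : ℤ) := by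
  have hform := unflip_ht r Q' hQ hnn n le_rfl
  rw [mu_last r Q' hend] at hform
  rw [if_neg (not_odd_two_mul r)] at hform
  omega

/-- lower-return characterization for Ψ -/
lemma unflip_ret_iff (hQ : IsPath Q') (hnn : ∀ a ≤ n, 0 ≤ ht Q' a) {a : ℕ} (ha : a < n) :
    ((unflip r Q') ⟨a, ha⟩ = 1 ∧ ht (unflip r Q') (a + 1) = 0) ↔
      (mu r Q' (a + 1) = mu r Q' a + 1 ∧ mu r Q' (a + 1) % 2 = 0) := by
  have hform := unflip_ht r Q' hQ hnn (a + 1) ha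
  have h2 : ht Q' (a + 1) = ht Q' a + Q' ⟨a, ha⟩ := ht_succ _ ha
  have hm1 : mu r Q' a ≤ mu r Q' (a + 1) := mu_mono r Q' (Nat.le_succ a) ha
  have hm2 := mu_succ_le r Q' hQ ha
  have hq := hQ ⟨a, ha⟩
  have hge : mu r Q' (a + 1) ≤ ht Q' (a + 1) := mu_le_ht r Q' ha
  have hgea : mu r Q' a ≤ ht Q' a := mu_le_ht r Q' (le_of_lt ha)
  have hu : (unflip r Q') ⟨a, ha⟩ =
      if Odd (mu r Q' (a + 1)) then -Q' ⟨a, ha⟩ else Q' ⟨a, ha⟩ := rfl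
  have himp : mu r Q' (a + 1) = mu r Q' a + 1 → ht Q' a = mu r Q' a := mu_inc r Q' ha
  rcases show mu r Q' (a + 1) = mu r Q' a ∨ mu r Q' (a + 1) = mu r Q' a + 1 by omega
    with hc | hc
  · simp only [Int.odd_iff] at hform hu
    split_ifs at hform hu <;> omega
  · have hpa := himp hc
    simp only [Int.odd_iff] at hform hu
    split_ifs at hform hu <;> omega

lemma unflip_retCnt (hQ : IsPath Q') (hnn : ∀ a ≤ n, 0 ≤ ht Q' a)
    (hend : 2 * (r : ℤ) ≤ ht Q' n) : retCnt (unflip r Q') n = r := by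
  have key : ∀ a ≤ n, (retCnt (unflip r Q') a : ℤ) = (mu r Q' a).toNat / 2 := by
    intro a
    induction a with
    | zero =>
      intro _
      rw [retCnt_zero, mu_zero r Q' hnn]
      simp
    | succ a ih =>
      intro ha
      have ha' : a < n := ha
      have ih' := ih (le_of_lt ha')
      rw [retCnt_succ _ ha']
      have hiff := unflip_ret_iff r Q' hQ hnn ha'
      have hm1 : mu r Q' a ≤ mu r Q' (a + 1) := mu_mono r Q' (Nat.le_succ a) ha'
      have hm2 := mu_succ_le r Q' hQ ha'
      have hnn1 : 0 ≤ mu r Q' a := mu_nonneg r Q' hnn (le_of_lt ha')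
      by_cases hc : ((unflip r Q') ⟨a, ha'⟩ = 1 ∧ ht (unflip r Q') (a + 1) = 0)
      · rw [if_pos hc]
        have hmc := hiff.mp hc
        push_cast
        omega
      · rw [if_neg hc]
        have hmc : ¬ (mu r Q' (a + 1) = mu r Q' a + 1 ∧ mu r Q' (a + 1) % 2 = 0) :=
          fun h => hc (hiff.mpr h)
        push_cast
        omega
  have := key n le_rfl
  rw [mu_last r Q' hend] at this
  omega

end Mu

end Stmt4Aux


open Stmt4Aux in
theorem stmt4 (n r : ℕ) :
    Nat.card {Q : Fin n → ℤ //
      IsPath Q ∧ 0 ≤ ht Q n ∧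
      (Finset.univ.filter (fun l : Fin n => Q l = 1 ∧ ht Q ((l : ℕ) + 1) = 0)).card = r} =
    Nat.card {Q' : Fin n → ℤ //
      IsPath Q' ∧ (∀ a ≤ n, 0 ≤ ht Q' a) ∧ 2 * (r : ℤ) ≤ ht Q' n} := by
  apply Nat.card_eq_of_bijective
    (f := fun Q => ⟨flipNeg Q.1, by
      obtain ⟨Q, hQ, hend, hcard⟩ := Q
      exact flipNeg_mem r Q hQ hend (by rw [retCnt_n]; exact hcard)⟩)
  constructor
  · rintro ⟨Q1, h1, e1, c1⟩ ⟨Q2, h2, e2, c2⟩ h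
    have h' : flipNeg Q1 = flipNeg Q2 := congrArg Subtype.val h
    apply Subtype.ext
    exact flipNeg_inj Q1 Q2 h1 h2 e1 e2
      (by rw [retCnt_n, retCnt_n, c1, c2]) h'
  · rintro ⟨Q', hQ, hnn, hend⟩
    refine ⟨⟨unflip r Q', unflip_isPath r Q' hQ, (unflip_end r Q' hQ hnn hend).1, ?_⟩, ?_⟩
    · rw [← retCnt_n]
      exact unflip_retCnt r Q' hQ hnn hend
    · apply Subtype.ext
      exact flipNeg_unflip r Q' hQ hnn
end

section
/- Let n ≥ 0 and let s ≥ 0 with s ≡ n (mod 2). Then the number of walks of length n constrained to the first octant (all positions (x,y) satisfy x ≥ y ≥ 0) whose endpoint (x,y) satisfies y ≤ x − s equals the number of walks of length n constrained to the upper half-plane (all positions satisfy y ≥ 0) that end at the point (s, 0). -/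
/-!
In the rotated coordinates `u = x + y`, `v = x - y` every step N, S, E, W changes `u` and `v` by
`±1` independently, so the unconstrained walks of length `n` to `(x, y)` number
`pascal n u * pascal n v`. By the reflection principle the walks confined to the upper half-plane
are counted by an alternating sum of two such products, and those confined to the octant (a Weyl
chamber of type `B₂`) by an alternating sum of eight; each closed form is checked against the
step recurrence, the initial values and its vanishing just outside the region.

Summing the octant formula over the endpoints with `x - y = c` telescopes to `H c - H (c + 2)`,
where `H c` is the number of half-plane walks to `(c, 0)`. Summing over `c = s, s + 1, …`
telescopes again, to `H s + H (s + 1)`, and `H (s + 1) = 0` because `s ≡ n (mod 2)`.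
-/

/-- A walk of length `n` with unit steps N, S, E, W. -/
def IsWalk {n : ℕ} (w : Fin n → ℤ × ℤ) : Prop :=
  ∀ l, w l = (0, 1) ∨ w l = (0, -1) ∨ w l = (1, 0) ∨ w l = (-1, 0)

/-- Position of the walk `w` after `a` steps. -/
def pos {n : ℕ} (w : Fin n → ℤ × ℤ) (a : ℕ) : ℤ × ℤ :=
  ∑ l ∈ Finset.univ.filter (fun l : Fin n => (l : ℕ) < a), w l

open Finset

/-- `pascal n k` is the number of `±1`-walks of length `n` from `0` to `k`, that is
`Nat.choose n ((n + k) / 2)` when `n + k` is even and `|k| ≤ n`, and `0` otherwise. -/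
def pascal : ℕ → ℤ → ℤ
  | 0, k => if k = 0 then 1 else 0
  | n + 1, k => pascal n (k - 1) + pascal n (k + 1)

theorem pascal_eq_zero_of_lt {n : ℕ} {k : ℤ} (h : (n : ℤ) < k) : pascal n k = 0 := by
  induction n generalizing k with
  | zero => simp only [pascal, if_neg (by omega : k ≠ 0)]
  | succ n ih => rw [pascal, ih (by omega), ih (by omega), add_zero]

theorem pascal_eq_zero_of_odd {n : ℕ} {k : ℤ} (h : Odd ((n : ℤ) + k)) : pascal n k = 0 := by
  rw [Int.odd_iff] at h
  induction n generalizing k with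
  | zero => simp only [pascal, if_neg (by omega : k ≠ 0)]
  | succ n ih => rw [pascal, ih (by omega), ih (by omega), add_zero]

theorem pascal_neg (n : ℕ) (k : ℤ) : pascal n (-k) = pascal n k := by
  induction n generalizing k with
  | zero => simp [pascal]
  | succ n ih =>
    rw [pascal, pascal, ← ih (k - 1), ← ih (k + 1), neg_sub', sub_neg_eq_add, neg_add', add_comm]

def steps : Finset (ℤ × ℤ) := {(0, 1), (0, -1), (1, 0), (-1, 0)}

theorem mem_steps {q : ℤ × ℤ} :
    q ∈ steps ↔ q = (0, 1) ∨ q = (0, -1) ∨ q = (1, 0) ∨ q = (-1, 0) := by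
  simp [steps]

theorem isWalk_iff {n : ℕ} {w : Fin n → ℤ × ℤ} : IsWalk w ↔ ∀ l, w l ∈ steps := by
  simp only [IsWalk, mem_steps]

theorem sum_steps {M : Type*} [AddCommMonoid M] (f : ℤ × ℤ → M) :
    ∑ q ∈ steps, f q = f (0, 1) + f (0, -1) + f (1, 0) + f (-1, 0) := by
  simp [steps, add_assoc]

section Positions

variable {n : ℕ} (w : Fin n → ℤ × ℤ)

theorem pos_zero : pos w 0 = 0 := by
  simp [pos]

theorem pos_length : pos w n = ∑ l, w l := by
  simp [pos]

theorem pos_snoc_of_le {a : ℕ} (q : ℤ × ℤ) (h : a ≤ n) : pos (Fin.snoc w q) a = pos w a := by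
  simp only [pos, sum_filter, Fin.sum_univ_castSucc, Fin.snoc_castSucc, Fin.val_castSucc,
    Fin.val_last, Fin.snoc_last, if_neg (Nat.not_lt.2 h), add_zero]

theorem pos_snoc_length (q : ℤ × ℤ) : pos (Fin.snoc w q) (n + 1) = pos w n + q := by
  simp [pos_length, Fin.sum_univ_castSucc]

end Positions

theorem pos_length_fst_le {n : ℕ} {w : Fin n → ℤ × ℤ} (hw : IsWalk w) : (pos w n).1 ≤ n := by
  rw [pos_length, Prod.fst_sum]
  calc ∑ l, (w l).1 ≤ ∑ _l : Fin n, (1 : ℤ) :=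
        sum_le_sum fun l _ => by rcases hw l with h | h | h | h <;> simp [h]
    _ = n := by simp

section WalkCount

def IsWalkTo (D : ℤ × ℤ → Prop) (p : ℤ × ℤ) {n : ℕ} (w : Fin n → ℤ × ℤ) : Prop :=
  IsWalk w ∧ (∀ a ≤ n, D (pos w a)) ∧ pos w n = p

noncomputable def walkCount (D : ℤ × ℤ → Prop) (n : ℕ) (p : ℤ × ℤ) : ℕ :=
  Nat.card {w : Fin n → ℤ × ℤ // IsWalkTo D p w}

instance (D : ℤ × ℤ → Prop) (p : ℤ × ℤ) (n : ℕ) :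
    Finite {w : Fin n → ℤ × ℤ // IsWalkTo D p w} :=
  Finite.of_injective (β := Fin n → steps) (fun w l => ⟨w.1 l, isWalk_iff.1 w.2.1 l⟩)
    fun _ _ h => Subtype.ext <| funext fun l => congrArg Subtype.val (congrFun h l)

def walkToEndpointEquiv (D : ℤ × ℤ → Prop) (n : ℕ) (E : Finset (ℤ × ℤ)) :
    {w : Fin n → ℤ × ℤ // IsWalk w ∧ (∀ a ≤ n, D (pos w a)) ∧ pos w n ∈ E} ≃
      Σ p : E, {w : Fin n → ℤ × ℤ // IsWalkTo D p w} where
  toFun w := ⟨⟨pos w.1 n, w.2.2.2⟩, w.1, w.2.1, w.2.2.1, rfl⟩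
  invFun w := ⟨w.2.1, w.2.2.1, w.2.2.2.1, by rw [w.2.2.2.2]; exact w.1.2⟩
  left_inv _ := rfl
  right_inv w := Sigma.subtype_ext (Subtype.ext w.2.2.2.2) rfl

theorem card_walks_endpoint_mem (D : ℤ × ℤ → Prop) (n : ℕ) (E : Finset (ℤ × ℤ)) :
    Nat.card {w : Fin n → ℤ × ℤ // IsWalk w ∧ (∀ a ≤ n, D (pos w a)) ∧ pos w n ∈ E} =
      ∑ p ∈ E, walkCount D n p := by
  rw [Nat.card_congr (walkToEndpointEquiv D n E), Nat.card_sigma]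
  exact sum_coe_sort E fun p => walkCount D n p

variable {D : ℤ × ℤ → Prop}

theorem isWalkTo_snoc {p q : ℤ × ℤ} {n : ℕ} (hp : D p) (w : Fin n → ℤ × ℤ) :
    IsWalkTo D p (Fin.snoc w q) ↔ q ∈ steps ∧ IsWalkTo D (p - q) w := by
  simp only [IsWalkTo, isWalk_iff, Fin.forall_fin_succ', Fin.snoc_castSucc, Fin.snoc_last,
    pos_snoc_length, ← eq_sub_iff_add_eq]
  constructor
  · rintro ⟨⟨hw, hq⟩, hD, hend⟩
    exact ⟨hq, hw, fun a ha => pos_snoc_of_le w q ha ▸ hD a (by omega), hend⟩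
  · rintro ⟨hq, hw, hD, hend⟩
    refine ⟨⟨hw, hq⟩, fun a ha => ?_, hend⟩
    rcases Nat.lt_or_ge n a with hna | hna
    · obtain rfl : a = n + 1 := by omega
      rwa [pos_snoc_length, hend, sub_add_cancel]
    · rw [pos_snoc_of_le w q hna]
      exact hD a hna

def walkToSnocEquiv {p : ℤ × ℤ} {n : ℕ} (hp : D p) :
    {w : Fin (n + 1) → ℤ × ℤ // IsWalkTo D p w} ≃
      Σ q : steps, {w : Fin n → ℤ × ℤ // IsWalkTo D (p - q) w} where
  toFun w :=
    have h := (isWalkTo_snoc hp (Fin.init w.1)).1 (by rw [Fin.snoc_init_self]; exact w.2)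
    ⟨⟨w.1 (Fin.last n), h.1⟩, Fin.init w.1, h.2⟩
  invFun w := ⟨Fin.snoc w.2.1 w.1.1, (isWalkTo_snoc hp _).2 ⟨w.1.2, w.2.2⟩⟩
  left_inv w := Subtype.ext (Fin.snoc_init_self w.1)
  right_inv _ := Sigma.subtype_ext (Subtype.ext (Fin.snoc_last (α := fun _ => ℤ × ℤ) _ _))
    (Fin.init_snoc (α := fun _ => ℤ × ℤ) _ _)

theorem walkCount_succ {p : ℤ × ℤ} (n : ℕ) (hp : D p) :
    walkCount D (n + 1) p = ∑ q ∈ steps, walkCount D n (p - q) := by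
  rw [walkCount, Nat.card_congr (walkToSnocEquiv hp), Nat.card_sigma]
  exact sum_coe_sort steps fun q => walkCount D n (p - q)

theorem walkCount_zero {p : ℤ × ℤ} (hp : D p) : walkCount D 0 p = if p = 0 then 1 else 0 := by
  have hw (w : Fin 0 → ℤ × ℤ) : IsWalkTo D p w ↔ p = 0 := by
    simp only [IsWalkTo, IsWalk, IsEmpty.forall_iff, pos_zero, Nat.le_zero, forall_eq, eq_comm,
      true_and, and_iff_right_iff_imp]
    rintro rfl
    exact hp
  rw [walkCount, Nat.card_congr (Equiv.subtypeEquivRight hw)]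
  by_cases h : p = 0 <;> simp [h]

theorem walkCount_eq_zero {p : ℤ × ℤ} (n : ℕ) (hp : ¬ D p) : walkCount D n p = 0 := by
  rw [walkCount, Nat.card_eq_zero]
  exact Or.inl ⟨fun w => hp (w.2.2.2 ▸ w.2.2.1 n le_rfl)⟩

theorem walkCount_eq_of_recurrence (F : ℕ → ℤ × ℤ → ℤ)
    (h_zero : ∀ p, D p → F 0 p = if p = 0 then 1 else 0)
    (h_succ : ∀ n p, D p → F (n + 1) p = ∑ q ∈ steps, F n (p - q))
    (h_wall : ∀ n p, ¬ D p → (∃ q ∈ steps, D (p + q)) → F n p = 0) :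
    ∀ n p, D p → (walkCount D n p : ℤ) = F n p := by
  intro n
  induction n with
  | zero =>
    intro p hp
    rw [walkCount_zero hp, h_zero p hp, Nat.cast_ite, Nat.cast_one, Nat.cast_zero]
  | succ n ih =>
    intro p hp
    rw [walkCount_succ n hp, h_succ n p hp, Nat.cast_sum]
    refine sum_congr rfl fun q hq => ?_
    by_cases hpq : D (p - q)
    · exact ih _ hpq
    · rw [walkCount_eq_zero n hpq, h_wall n _ hpq ⟨q, hq, by rwa [sub_add_cancel]⟩,
        Nat.cast_zero]

end WalkCount

def upperHalfPlane (p : ℤ × ℤ) : Prop := 0 ≤ p.2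

def octant (p : ℤ × ℤ) : Prop := p.2 ≤ p.1 ∧ 0 ≤ p.2

def halfPlaneFormula (n : ℕ) (p : ℤ × ℤ) : ℤ :=
  pascal n (p.1 + p.2) * pascal n (p.1 - p.2) -
    pascal n (p.1 + p.2 + 2) * pascal n (p.1 - p.2 - 2)

/-- Expanded, this is `∑ ε · pascal n (u - a) * pascal n (v - b)` over the orbit `(a, b)` of the
origin, in the coordinates `u = x + y`, `v = x - y`, under the reflections in the walls `y = -1`
and `y = x + 1`, with `ε` the sign of the reflection. -/
def octantFormula (n : ℕ) (p : ℤ × ℤ) : ℤ :=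
  (pascal n (p.1 + p.2) - pascal n (p.1 + p.2 + 6)) *
      (pascal n (p.1 - p.2) - pascal n (p.1 - p.2 + 2)) -
    (pascal n (p.1 + p.2 + 2) - pascal n (p.1 + p.2 + 4)) *
      (pascal n (p.1 - p.2 - 2) - pascal n (p.1 - p.2 + 4))

theorem halfPlaneFormula_succ (n : ℕ) (p : ℤ × ℤ) :
    halfPlaneFormula (n + 1) p = ∑ q ∈ steps, halfPlaneFormula n (p - q) := by
  simp only [halfPlaneFormula, sum_steps, pascal, Prod.fst_sub, Prod.snd_sub]
  ring_nf

theorem octantFormula_succ (n : ℕ) (p : ℤ × ℤ) :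
    octantFormula (n + 1) p = ∑ q ∈ steps, octantFormula n (p - q) := by
  simp only [octantFormula, sum_steps, pascal, Prod.fst_sub, Prod.snd_sub]
  ring_nf

theorem halfPlaneFormula_wall (n : ℕ) (x : ℤ) : halfPlaneFormula n (x, -1) = 0 := by
  simp only [halfPlaneFormula]
  ring_nf

theorem octantFormula_wall (n : ℕ) (x : ℤ) : octantFormula n (x, -1) = 0 := by
  simp only [octantFormula]
  ring_nf

theorem octantFormula_diagonal_wall (n : ℕ) (x : ℤ) : octantFormula n (x, x + 1) = 0 := by
  simp only [octantFormula, show x - (x + 1) = -1 by ring, show -1 + 2 = (1 : ℤ) by norm_num,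
    show (-1 : ℤ) - 2 = -3 by norm_num, show -1 + 4 = (3 : ℤ) by norm_num, pascal_neg, sub_self,
    mul_zero]

theorem walkCount_upperHalfPlane (n : ℕ) {p : ℤ × ℤ} (hp : upperHalfPlane p) :
    (walkCount upperHalfPlane n p : ℤ) = halfPlaneFormula n p := by
  refine walkCount_eq_of_recurrence _ (fun p hp => ?_) (fun n p _ => halfPlaneFormula_succ n p)
    (fun n p hp hpq => ?_) n p hp
  · obtain ⟨x, y⟩ := p
    simp only [upperHalfPlane, halfPlaneFormula, pascal, Prod.ext_iff, Prod.fst_zero,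
      Prod.snd_zero] at hp ⊢
    split_ifs <;> omega
  · obtain ⟨x, y⟩ := p
    obtain ⟨q, hq, hpq⟩ := hpq
    obtain rfl : y = -1 := by
      rcases mem_steps.1 hq with rfl | rfl | rfl | rfl <;>
        simp only [upperHalfPlane, Prod.mk_add_mk] at hp hpq <;> omega
    exact halfPlaneFormula_wall n x

theorem walkCount_octant (n : ℕ) {p : ℤ × ℤ} (hp : octant p) :
    (walkCount octant n p : ℤ) = octantFormula n p := by
  refine walkCount_eq_of_recurrence _ (fun p hp => ?_) (fun n p _ => octantFormula_succ n p)
    (fun n p hp hpq => ?_) n p hp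
  · obtain ⟨x, y⟩ := p
    simp only [octant, octantFormula, pascal, Prod.ext_iff, Prod.fst_zero, Prod.snd_zero] at hp ⊢
    split_ifs <;> omega
  · obtain ⟨x, y⟩ := p
    obtain ⟨q, hq, hpq⟩ := hpq
    have : y = -1 ∨ y = x + 1 := by
      rcases mem_steps.1 hq with rfl | rfl | rfl | rfl <;>
        simp only [octant, Prod.mk_add_mk] at hp hpq <;> omega
    rcases this with rfl | rfl
    · exact octantFormula_wall n x
    · exact octantFormula_diagonal_wall n x

theorem sum_octantFormula_column (n : ℕ) {c : ℤ} (hc : 0 ≤ c) :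
    ∑ i ∈ range (n + 1), octantFormula n (i + c, i) =
      halfPlaneFormula n (c, 0) - halfPlaneFormula n (c + 2, 0) := by
  set g : ℕ → ℤ := fun i =>
    pascal n (c + 2 * i) + pascal n (c + 2 * i + 2) + pascal n (c + 2 * i + 4)
  set h : ℕ → ℤ := fun i => pascal n (c + 2 * i + 2)
  have hterm (i : ℕ) : octantFormula n (i + c, i) =
      (g i - g (i + 1)) * (pascal n c - pascal n (c + 2)) -
        (h i - h (i + 1)) * (pascal n (c - 2) - pascal n (c + 4)) := by
    simp only [octantFormula, g, h]
    push_cast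
    ring_nf
  rw [sum_congr rfl fun i _ => hterm i, sum_sub_distrib, ← sum_mul, ← sum_mul, sum_range_sub',
    sum_range_sub']
  have hg : g (n + 1) = 0 := by
    simp only [g]
    rw [pascal_eq_zero_of_lt (by push_cast; omega), pascal_eq_zero_of_lt (by push_cast; omega),
      pascal_eq_zero_of_lt (by push_cast; omega)]
    norm_num
  have hh : h (n + 1) = 0 := pascal_eq_zero_of_lt (by push_cast; omega)
  simp only [hg, hh, g, h, halfPlaneFormula]
  ring_nf

theorem halfPlaneFormula_axis_eq_zero {n : ℕ} {c : ℤ} (h : (n : ℤ) < c ∨ Odd ((n : ℤ) + c)) :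
    halfPlaneFormula n (c, 0) = 0 := by
  have hvanish (k : ℤ) (hk : 0 ≤ k) : pascal n (c + 2 * k) = 0 := by
    rcases h with h | h
    · exact pascal_eq_zero_of_lt (by omega)
    · exact pascal_eq_zero_of_odd (by rw [← add_assoc]; exact h.add_even (even_two_mul k))
  have h0 := hvanish 0 le_rfl
  have h1 := hvanish 1 zero_le_one
  simp only [mul_zero, add_zero, mul_one] at h0 h1
  simp [halfPlaneFormula, h0, h1]

theorem sum_halfPlaneFormula_axis_sub (n : ℕ) {s : ℤ} (hs : 0 ≤ s) (hpar : s % 2 = n % 2) :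
    ∑ j ∈ range (n + 1), (halfPlaneFormula n (s + j, 0) - halfPlaneFormula n (s + j + 2, 0)) =
      halfPlaneFormula n (s, 0) := by
  set m : ℕ → ℤ := fun j => halfPlaneFormula n (s + j, 0) + halfPlaneFormula n (s + j + 1, 0)
  have hterm (j : ℕ) :
      halfPlaneFormula n (s + j, 0) - halfPlaneFormula n (s + j + 2, 0) = m j - m (j + 1) := by
    simp only [m]
    push_cast
    ring_nf
  have hodd : halfPlaneFormula n (s + 1, 0) = 0 :=
    halfPlaneFormula_axis_eq_zero (.inr (Int.odd_iff.2 (by omega)))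
  have hfar {c : ℤ} (hc : (n : ℤ) < c) : halfPlaneFormula n (c, 0) = 0 :=
    halfPlaneFormula_axis_eq_zero (.inl hc)
  rw [sum_congr rfl fun j _ => hterm j, sum_range_sub']
  simp only [m, Nat.cast_zero, add_zero, hodd, hfar (c := s + ↑(n + 1)) (by omega),
    hfar (c := s + ↑(n + 1) + 1) (by omega), sub_zero]

theorem card_octant_walks_eq_sum (n : ℕ) {s : ℤ} (hs : 0 ≤ s) :
    Nat.card {w : Fin n → ℤ × ℤ // IsWalk w ∧ (∀ a ≤ n, (pos w a).2 ≤ (pos w a).1 ∧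
      0 ≤ (pos w a).2) ∧ (pos w n).2 ≤ (pos w n).1 - s} =
      ∑ j ∈ range (n + 1), ∑ i ∈ range (n + 1), walkCount octant n (i + (s + j), i) := by
  set E := (range (n + 1) ×ˢ range (n + 1)).image
    fun ij : ℕ × ℕ => ((ij.1 + (s + ij.2) : ℤ), (ij.1 : ℤ))
  have hE (w : Fin n → ℤ × ℤ) (hw : IsWalk w) (hD : octant (pos w n)) :
      (pos w n).2 ≤ (pos w n).1 - s ↔ pos w n ∈ E := by
    have hx := pos_length_fst_le hw
    generalize pos w n = p at hD hx ⊢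
    obtain ⟨x, y⟩ := p
    simp only [octant, E, mem_image, mem_product, mem_range, Prod.exists, Prod.mk.injEq]
      at hD hx ⊢
    constructor
    · exact fun h => ⟨y.toNat, (x - s - y).toNat, by omega⟩
    · rintro ⟨i, j, -, rfl, rfl⟩
      omega
  have hinj : Set.InjOn (fun ij : ℕ × ℕ => ((ij.1 + (s + ij.2) : ℤ), (ij.1 : ℤ)))
      ↑(range (n + 1) ×ˢ range (n + 1)) := by
    rintro ⟨i, j⟩ - ⟨i', j'⟩ - h
    simp only [Prod.mk.injEq] at h ⊢
    omega
  calc _ = Nat.card {w : Fin n → ℤ × ℤ //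
          IsWalk w ∧ (∀ a ≤ n, octant (pos w a)) ∧ pos w n ∈ E} :=
        Nat.card_congr (Equiv.subtypeEquivRight fun w =>
          and_congr_right fun hw => and_congr_right fun hD => hE w hw (hD n le_rfl))
    _ = _ := by rw [card_walks_endpoint_mem, sum_image hinj, sum_product_right]

theorem stmt6 (n : ℕ) (s : ℤ) (hs : 0 ≤ s) (hpar : s % 2 = (n : ℤ) % 2) :
    Nat.card {w : Fin n → ℤ × ℤ //
      IsWalk w ∧ (∀ a ≤ n, (pos w a).2 ≤ (pos w a).1 ∧ 0 ≤ (pos w a).2) ∧ (pos w n).2 ≤ (pos w n).1 - s} =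
    Nat.card {w : Fin n → ℤ × ℤ //
      IsWalk w ∧ (∀ a ≤ n, 0 ≤ (pos w a).2) ∧ pos w n = (s, 0)} := by
  rw [card_octant_walks_eq_sum n hs]
  show _ = walkCount upperHalfPlane n (s, 0)
  rw [← Nat.cast_inj (R := ℤ), walkCount_upperHalfPlane n le_rfl,
    ← sum_halfPlaneFormula_axis_sub n hs hpar]
  push_cast
  refine sum_congr rfl fun j _ => ?_
  rw [← sum_octantFormula_column n (by positivity)]
  exact sum_congr rfl fun i _ => walkCount_octant n ⟨by omega, by omega⟩
end

section
/- Let n, i, j be integers with i ≥ j ≥ 0, i + j ≤ n and i + j ≡ n (mod 2). Then the number of pairs (P,Q) of lattice paths of length n satisfying Q ≤ P, P ≥ 0, Q ≥ 0 and i − j ≤ h(Q) ≤ i + j ≤ h(P) equals the number of walks of length n constrained to the first octant (all positions (x,y) satisfy x ≥ y ≥ 0) whose endpoint (x,y) satisfies i − j ≤ x − y ≤ i + j ≤ x + y. -/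
/-- The walk associated to a pair of paths. -/
def toWalk {n : ℕ} (P Q : Fin n → ℤ) : Fin n → ℤ × ℤ :=
  fun l => ((P l + Q l) / 2, (P l - Q l) / 2)

/-- The pair of paths associated to a walk. -/
def toPair {n : ℕ} (w : Fin n → ℤ × ℤ) : (Fin n → ℤ) × (Fin n → ℤ) :=
  (fun l => (w l).1 + (w l).2, fun l => (w l).1 - (w l).2)

lemma pos_fst {n : ℕ} (w : Fin n → ℤ × ℤ) (a : ℕ) :
    (pos w a).1 = ∑ l ∈ Finset.univ.filter (fun l : Fin n => (l : ℕ) < a), (w l).1 := by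
  simp [pos, Prod.fst_sum]

lemma pos_snd {n : ℕ} (w : Fin n → ℤ × ℤ) (a : ℕ) :
    (pos w a).2 = ∑ l ∈ Finset.univ.filter (fun l : Fin n => (l : ℕ) < a), (w l).2 := by
  simp [pos, Prod.snd_sum]

lemma two_pos_fst {n : ℕ} (P Q : Fin n → ℤ) (hP : IsPath P) (hQ : IsPath Q) (a : ℕ) :
    2 * (pos (toWalk P Q) a).1 = ht P a + ht Q a := by
  rw [pos_fst, Finset.mul_sum, ht, ht, ← Finset.sum_add_distrib]
  refine Finset.sum_congr rfl fun l _ => ?_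
  rcases hP l with h1 | h1 <;> rcases hQ l with h2 | h2 <;> simp [toWalk, h1, h2]

lemma two_pos_snd {n : ℕ} (P Q : Fin n → ℤ) (hP : IsPath P) (hQ : IsPath Q) (a : ℕ) :
    2 * (pos (toWalk P Q) a).2 = ht P a - ht Q a := by
  rw [pos_snd, Finset.mul_sum, ht, ht, ← Finset.sum_sub_distrib]
  refine Finset.sum_congr rfl fun l _ => ?_
  rcases hP l with h1 | h1 <;> rcases hQ l with h2 | h2 <;> simp [toWalk, h1, h2]

lemma ht_toPair_fst {n : ℕ} (w : Fin n → ℤ × ℤ) (a : ℕ) :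
    ht (toPair w).1 a = (pos w a).1 + (pos w a).2 := by
  rw [ht, pos_fst, pos_snd, ← Finset.sum_add_distrib]; rfl

lemma ht_toPair_snd {n : ℕ} (w : Fin n → ℤ × ℤ) (a : ℕ) :
    ht (toPair w).2 a = (pos w a).1 - (pos w a).2 := by
  rw [ht, pos_fst, pos_snd, ← Finset.sum_sub_distrib]; rfl

theorem stmt7 (n : ℕ) (i j : ℤ) (hj : 0 ≤ j) (hij : j ≤ i) (hn : i + j ≤ (n : ℤ))
    (hpar : (i + j) % 2 = (n : ℤ) % 2) :
    Nat.card {PQ : (Fin n → ℤ) × (Fin n → ℤ) //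
      IsPath PQ.1 ∧ IsPath PQ.2 ∧
      (∀ a ≤ n, ht PQ.2 a ≤ ht PQ.1 a) ∧
      (∀ a ≤ n, 0 ≤ ht PQ.1 a) ∧ (∀ a ≤ n, 0 ≤ ht PQ.2 a) ∧
      i - j ≤ ht PQ.2 n ∧ ht PQ.2 n ≤ i + j ∧ i + j ≤ ht PQ.1 n} =
    Nat.card {w : Fin n → ℤ × ℤ //
      IsWalk w ∧ (∀ a ≤ n, (pos w a).2 ≤ (pos w a).1 ∧ 0 ≤ (pos w a).2) ∧
      i - j ≤ (pos w n).1 - (pos w n).2 ∧ (pos w n).1 - (pos w n).2 ≤ i + j ∧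
      i + j ≤ (pos w n).1 + (pos w n).2} := by
  refine Nat.card_congr ?_
  refine
    { toFun := fun x => ⟨toWalk x.1.1 x.1.2, ?_⟩
      invFun := fun y => ⟨toPair y.1, ?_⟩
      left_inv := ?_
      right_inv := ?_ }
  · obtain ⟨⟨P, Q⟩, hP, hQ, hle, hPnn, hQnn, h1, h2, h3⟩ := x
    refine ⟨?_, ?_, ?_, ?_, ?_⟩
    · intro l
      rcases hP l with e1 | e1 <;> rcases hQ l with e2 | e2 <;>
        simp [toWalk, show P l = _ from e1, show Q l = _ from e2]
    · intro a ha
      have e1 := two_pos_fst P Q hP hQ a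
      have e2 := two_pos_snd P Q hP hQ a
      constructor <;> nlinarith [hle a ha, hQnn a ha]
    · have e1 := two_pos_fst P Q hP hQ n
      have e2 := two_pos_snd P Q hP hQ n
      nlinarith
    · have e1 := two_pos_fst P Q hP hQ n
      have e2 := two_pos_snd P Q hP hQ n
      nlinarith
    · have e1 := two_pos_fst P Q hP hQ n
      have e2 := two_pos_snd P Q hP hQ n
      nlinarith
  · obtain ⟨w, hw, hoct, e1, e2, e3⟩ := y
    refine ⟨?_, ?_, ?_, ?_, ?_, ?_, ?_, ?_⟩
    · intro l
      rcases hw l with h | h | h | h <;> simp [toPair, h]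
    · intro l
      rcases hw l with h | h | h | h <;> simp [toPair, h]
    · intro a ha
      rw [ht_toPair_fst, ht_toPair_snd]
      linarith [(hoct a ha).2]
    · intro a ha
      rw [ht_toPair_fst]
      have h := hoct a ha
      linarith [h.1, h.2]
    · intro a ha
      rw [ht_toPair_snd]
      have h := hoct a ha
      linarith [h.1, h.2]
    · rw [ht_toPair_snd]; exact e1
    · rw [ht_toPair_snd]; exact e2
    · rw [ht_toPair_fst]; exact e3
  · rintro ⟨⟨P, Q⟩, hP, hQ, -⟩
    apply Subtype.ext
    show toPair (toWalk P Q) = (P, Q)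
    refine Prod.ext (funext fun l => ?_) (funext fun l => ?_) <;>
      rcases hP l with h1 | h1 <;> rcases hQ l with h2 | h2 <;>
        simp [toPair, toWalk, show P l = _ from h1, show Q l = _ from h2]
  · rintro ⟨w, hw, -⟩
    apply Subtype.ext
    show toWalk (toPair w).1 (toPair w).2 = w
    funext l
    rcases hw l with h | h | h | h <;> simp [toPair, toWalk, h]
end

section
/- For every n ≥ 0, the number of walks of length n constrained to the first quadrant (all positions satisfy x ≥ 0 and y ≥ 0) that end on the x-axis equals the number of walks of length n constrained to the upper half-plane (all positions satisfy y ≥ 0) that end at the point (δ_n, 0), where δ_n is the remainder of n modulo 2. -/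
namespace StmtAux

variable {n : ℕ}

def X (w : Fin n → ℤ × ℤ) (a : ℕ) : ℤ := (pos w a).1

lemma pos_zero (w : Fin n → ℤ × ℤ) : pos w 0 = 0 := by
  simp [pos]

lemma X_zero (w : Fin n → ℤ × ℤ) : X w 0 = 0 := by simp [X, pos_zero]

lemma pos_succ_of_lt (w : Fin n → ℤ × ℤ) {a : ℕ} (h : a < n) :
    pos w (a + 1) = pos w a + w ⟨a, h⟩ := by
  have hset : Finset.univ.filter (fun l : Fin n => (l : ℕ) < a + 1)
      = insert ⟨a, h⟩ (Finset.univ.filter (fun l : Fin n => (l : ℕ) < a)) := by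
    ext l
    simp [Fin.ext_iff]
    omega
  rw [pos, hset, Finset.sum_insert (by simp), pos]
  exact add_comm _ _

lemma pos_succ_of_ge (w : Fin n → ℤ × ℤ) {a : ℕ} (h : ¬ a < n) :
    pos w (a + 1) = pos w a := by
  rw [pos, pos]
  congr 1
  ext l
  simp only [Finset.mem_filter, Finset.mem_univ, true_and]
  have := l.isLt
  omega

lemma X_succ_of_lt (w : Fin n → ℤ × ℤ) {a : ℕ} (h : a < n) :
    X w (a + 1) = X w a + (w ⟨a, h⟩).1 := by
  rw [X, X, pos_succ_of_lt w h]
  rfl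

lemma X_succ_of_ge (w : Fin n → ℤ × ℤ) {a : ℕ} (h : ¬ a < n) :
    X w (a + 1) = X w a := by
  rw [X, X, pos_succ_of_ge w h]

/-- steps of the walk are bounded in the first coordinate -/
lemma X_step_bound (w : Fin n → ℤ × ℤ) (hw : IsWalk w) (a : ℕ) :
    X w a - 1 ≤ X w (a + 1) ∧ X w (a + 1) ≤ X w a + 1 := by
  by_cases h : a < n
  · have hs := X_succ_of_lt w h
    rcases hw ⟨a, h⟩ with hc | hc | hc | hc <;> rw [hc] at hs <;> simp at hs <;> omega
  · have hs := X_succ_of_ge w h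
    omega

/-- running prefix minimum of the x-coordinate -/
def mfun (w : Fin n → ℤ × ℤ) : ℕ → ℤ
  | 0 => 0
  | a + 1 => min (mfun w a) (X w (a + 1))

lemma m_zero (w : Fin n → ℤ × ℤ) : mfun w 0 = 0 := rfl

lemma m_succ (w : Fin n → ℤ × ℤ) (a : ℕ) :
    mfun w (a + 1) = min (mfun w a) (X w (a + 1)) := rfl

lemma m_le_X (w : Fin n → ℤ × ℤ) : ∀ a, mfun w a ≤ X w a
  | 0 => by rw [m_zero, X_zero]
  | a + 1 => by rw [m_succ]; omega

lemma m_nonpos (w : Fin n → ℤ × ℤ) : ∀ a, mfun w a ≤ 0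
  | 0 => le_refl 0
  | a + 1 => by have := m_nonpos w a; rw [m_succ]; omega

lemma m_jump (w : Fin n → ℤ × ℤ) (hw : IsWalk w) (a : ℕ) :
    mfun w (a + 1) = mfun w a ∨
      (mfun w (a + 1) = mfun w a - 1 ∧ X w a = mfun w a ∧
        X w (a + 1) = mfun w a - 1) := by
  have hb := X_step_bound w hw a
  have hle := m_le_X w a
  rw [m_succ]
  omega

/-- suffix minimum (from `a` to `n`) of the x-coordinate -/
def mu (w : Fin n → ℤ × ℤ) (a : ℕ) : ℤ :=
  if h : a < n then min (X w a) (mu w (a + 1)) else X w n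
  termination_by n - a
  decreasing_by omega

lemma mu_of_lt (w : Fin n → ℤ × ℤ) {a : ℕ} (h : a < n) :
    mu w a = min (X w a) (mu w (a + 1)) := by
  rw [mu]; simp [h]

lemma mu_of_ge (w : Fin n → ℤ × ℤ) {a : ℕ} (h : ¬ a < n) :
    mu w a = X w n := by
  rw [mu]; simp [h]

lemma mu_le_X (w : Fin n → ℤ × ℤ) {a : ℕ} (h : a ≤ n) : mu w a ≤ X w a := by
  by_cases h' : a < n
  · rw [mu_of_lt w h']; omega
  · have : a = n := by omega
    rw [mu_of_ge w h', this]

lemma mu_nonneg (w : Fin n → ℤ × ℤ) (hX : ∀ b ≤ n, 0 ≤ X w b) :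
    ∀ d a, n - a ≤ d → 0 ≤ mu w a := by
  intro d
  induction d with
  | zero =>
    intro a ha
    have h' : ¬ a < n := by omega
    rw [mu_of_ge w h']
    exact hX n le_rfl
  | succ d ih =>
    intro a ha
    by_cases h' : a < n
    · rw [mu_of_lt w h']
      have h1 := ih (a + 1) (by omega)
      have h2 := hX a (by omega)
      omega
    · rw [mu_of_ge w h']
      exact hX n le_rfl

def Mnum (w : Fin n → ℤ × ℤ) : ℤ := (X w n - (n : ℤ) % 2) / 2

def cfun (w : Fin n → ℤ × ℤ) (a : ℕ) : ℤ := min (Mnum w) (mu w a)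

lemma c_jump (w : Fin n → ℤ × ℤ) (hw : IsWalk w) (a : ℕ) :
    cfun w (a + 1) = cfun w a ∨
      (cfun w (a + 1) = cfun w a + 1 ∧ X w a = cfun w a ∧
        X w (a + 1) = cfun w a + 1) := by
  by_cases h : a < n
  · have hmu := mu_of_lt w h
    have hb := X_step_bound w hw a
    have hXmu := mu_le_X w (show a + 1 ≤ n by omega)
    rw [cfun, cfun, hmu]
    omega
  · have h1 := mu_of_ge w h
    have h2 := mu_of_ge w (show ¬ a + 1 < n by omega)
    left
    rw [cfun, cfun, h1, h2]

/-- parity of x+y position -/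
lemma parity (w : Fin n → ℤ × ℤ) (hw : IsWalk w) :
    ∀ a, a ≤ n → (2 : ℤ) ∣ ((pos w a).1 + (pos w a).2 - a) := by
  intro a
  induction a with
  | zero => intro _; simp [pos_zero]
  | succ a ih =>
    intro ha
    have h : a < n := by omega
    have hih := ih (by omega)
    rw [pos_succ_of_lt w h]
    rcases hw ⟨a, h⟩ with hc | hc | hc | hc <;> rw [hc] <;>
      simp only [Prod.fst_add, Prod.snd_add] <;> push_cast <;> omega


/-- the forward map: flip W-steps at new x-minima -/
def Phi (w : Fin n → ℤ × ℤ) (l : Fin n) : ℤ × ℤ :=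
  ((X w ((l : ℕ) + 1) - 2 * mfun w ((l : ℕ) + 1)) - (X w (l : ℕ) - 2 * mfun w (l : ℕ)),
    (w l).2)

/-- the inverse map -/
def Psi (w : Fin n → ℤ × ℤ) (l : Fin n) : ℤ × ℤ :=
  ((X w ((l : ℕ) + 1) - 2 * cfun w ((l : ℕ) + 1)) - (X w (l : ℕ) - 2 * cfun w (l : ℕ)),
    (w l).2)

lemma pos_eq_of_steps (v w : Fin n → ℤ × ℤ) (f : ℕ → ℤ) (hf : f 0 = 0)
    (hv : ∀ l : Fin n, v l = (f ((l : ℕ) + 1) - f (l : ℕ), (w l).2)) :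
    ∀ a, a ≤ n → pos v a = (f a, (pos w a).2) := by
  intro a
  induction a with
  | zero =>
    intro _
    rw [pos_zero, pos_zero, hf]
    rfl
  | succ a ih =>
    intro ha
    have h : a < n := by omega
    rw [pos_succ_of_lt v h, pos_succ_of_lt w h, ih (by omega), hv ⟨a, h⟩]
    ext <;> simp

lemma pos_Phi (w : Fin n → ℤ × ℤ) :
    ∀ a, a ≤ n → pos (Phi w) a = (X w a - 2 * mfun w a, (pos w a).2) := by
  apply pos_eq_of_steps (Phi w) w (fun a => X w a - 2 * mfun w a)
  · rw [X_zero, m_zero]; ring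
  · intro l; rfl

lemma cfun_zero (w : Fin n → ℤ × ℤ) (hX : ∀ b ≤ n, 0 ≤ X w b)
    (hpar : (2 : ℤ) ∣ (X w n - (n : ℤ) % 2)) : cfun w 0 = 0 := by
  have h1 : 0 ≤ mu w 0 := mu_nonneg w hX n 0 (by omega)
  have h2 : mu w 0 ≤ X w 0 := mu_le_X w (by omega)
  have h3 := X_zero w
  have hM : 2 * Mnum w = X w n - (n : ℤ) % 2 := by
    rw [Mnum]
    exact Int.mul_ediv_cancel' hpar
  have hXn := hX n le_rfl
  rw [cfun]
  omega

lemma pos_Psi (w : Fin n → ℤ × ℤ) (hX : ∀ b ≤ n, 0 ≤ X w b)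
    (hpar : (2 : ℤ) ∣ (X w n - (n : ℤ) % 2)) :
    ∀ a, a ≤ n → pos (Psi w) a = (X w a - 2 * cfun w a, (pos w a).2) := by
  apply pos_eq_of_steps (Psi w) w (fun a => X w a - 2 * cfun w a)
  · rw [X_zero, cfun_zero w hX hpar]; ring
  · intro l; rfl

lemma isWalk_of (w v : Fin n → ℤ × ℤ) (hw : IsWalk w)
    (hv2 : ∀ l, (v l).2 = (w l).2)
    (hv1 : ∀ l, (v l).1 = (w l).1 ∨ ((w l).1 = -1 ∧ (v l).1 = 1) ∨
      ((w l).1 = 1 ∧ (v l).1 = -1)) : IsWalk v := by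
  intro l
  have h2 := hv2 l
  have h1 := hv1 l
  rcases hw l with hc | hc | hc | hc <;> rw [hc] at h1 h2 <;> simp at h1 h2
  · exact Or.inl (Prod.ext h1 h2)
  · exact Or.inr (Or.inl (Prod.ext h1 h2))
  · rcases h1 with h1 | h1
    · exact Or.inr (Or.inr (Or.inl (Prod.ext h1 h2)))
    · exact Or.inr (Or.inr (Or.inr (Prod.ext h1 h2)))
  · rcases h1 with h1 | h1
    · exact Or.inr (Or.inr (Or.inr (Prod.ext h1 h2)))
    · exact Or.inr (Or.inr (Or.inl (Prod.ext h1 h2)))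

lemma isWalk_Phi (w : Fin n → ℤ × ℤ) (hw : IsWalk w) : IsWalk (Phi w) := by
  apply isWalk_of w (Phi w) hw (fun l => rfl)
  intro l
  have hs := X_succ_of_lt w l.isLt
  rw [Fin.eta] at hs
  have hj := m_jump w hw (l : ℕ)
  have hle := m_le_X w (l : ℕ)
  simp only [Phi]
  omega

lemma isWalk_Psi (w : Fin n → ℤ × ℤ) (hw : IsWalk w) : IsWalk (Psi w) := by
  apply isWalk_of w (Psi w) hw (fun l => rfl)
  intro l
  have hs := X_succ_of_lt w l.isLt
  rw [Fin.eta] at hs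
  have hj := c_jump w hw (l : ℕ)
  simp only [Psi]
  omega


/-- Key claim A: capped suffix minimum of the transformed walk recovers prefix minimum -/
lemma claimA (w : Fin n → ℤ × ℤ) (hw : IsWalk w) :
    ∀ d a, n = a + d → min (-(mfun w n)) (mu (Phi w) a) = -(mfun w a) := by
  intro d
  induction d with
  | zero =>
    intro a ha
    have han : a = n := by omega
    subst han
    have h' : ¬ a < a := by omega
    rw [mu_of_ge (Phi w) h']
    have hXP : X (Phi w) a = X w a - 2 * mfun w a := by
      rw [X, pos_Phi w a le_rfl]
    have hle := m_le_X w a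
    rw [hXP]
    omega
  | succ d ih =>
    intro a ha
    have h : a < n := by omega
    have hih := ih (a + 1) (by omega)
    have hXP : X (Phi w) a = X w a - 2 * mfun w a := by
      rw [X, pos_Phi w a (by omega)]
    have hj := m_jump w hw a
    have hle := m_le_X w a
    rw [mu_of_lt (Phi w) h, hXP]
    omega

/-- Key claim B: prefix minimum of the inverse-transformed walk recovers capped suffix min -/
lemma claimB (w : Fin n → ℤ × ℤ) (hw : IsWalk w) (hX : ∀ b ≤ n, 0 ≤ X w b)
    (hpar : (2 : ℤ) ∣ (X w n - (n : ℤ) % 2)) :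
    ∀ a, a ≤ n → mfun (Psi w) a = -(cfun w a) := by
  intro a
  induction a with
  | zero =>
    intro _
    rw [m_zero, cfun_zero w hX hpar, neg_zero]
  | succ a ih =>
    intro ha
    have hih := ih (by omega)
    have hXP : X (Psi w) (a + 1) = X w (a + 1) - 2 * cfun w (a + 1) := by
      rw [X, pos_Psi w hX hpar (a + 1) ha]
    have hj := c_jump w hw a
    have h1 : cfun w (a + 1) ≤ mu w (a + 1) := min_le_right _ _
    have h2 : mu w (a + 1) ≤ X w (a + 1) := mu_le_X w ha
    rw [m_succ, hih, hXP]
    omega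

lemma phi_psi (w : Fin n → ℤ × ℤ) (hw : IsWalk w) (hX : ∀ b ≤ n, 0 ≤ X w b)
    (hpar : (2 : ℤ) ∣ (X w n - (n : ℤ) % 2)) : Phi (Psi w) = w := by
  funext l
  have hB1 := claimB w hw hX hpar (l : ℕ) (by omega)
  have hB2 := claimB w hw hX hpar ((l : ℕ) + 1) l.isLt
  have hX1 : X (Psi w) (l : ℕ) = X w (l : ℕ) - 2 * cfun w (l : ℕ) := by
    rw [X, pos_Psi w hX hpar (l : ℕ) (by omega)]
  have hX2 : X (Psi w) ((l : ℕ) + 1) = X w ((l : ℕ) + 1) - 2 * cfun w ((l : ℕ) + 1) := by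
    rw [X, pos_Psi w hX hpar ((l : ℕ) + 1) l.isLt]
  have hs := X_succ_of_lt w l.isLt
  rw [Fin.eta] at hs
  have h2 : (Psi w l).2 = (w l).2 := rfl
  apply Prod.ext
  · show (X (Psi w) ((l : ℕ) + 1) - 2 * mfun (Psi w) ((l : ℕ) + 1))
      - (X (Psi w) (l : ℕ) - 2 * mfun (Psi w) (l : ℕ)) = (w l).1
    rw [hB1, hB2, hX1, hX2]
    omega
  · exact h2

lemma psi_phi (w : Fin n → ℤ × ℤ) (hw : IsWalk w) (hend : X w n = (n : ℤ) % 2) :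
    Psi (Phi w) = w := by
  have hXP : ∀ a, a ≤ n → X (Phi w) a = X w a - 2 * mfun w a := by
    intro a ha
    rw [X, pos_Phi w a ha]
  have hM : Mnum (Phi w) = -(mfun w n) := by
    have h1 : X (Phi w) n - (n : ℤ) % 2 = 2 * (-(mfun w n)) := by
      rw [hXP n le_rfl, hend]
      ring
    rw [Mnum, h1]
    exact Int.mul_ediv_cancel_left _ (by norm_num)
  have hc : ∀ a, a ≤ n → cfun (Phi w) a = -(mfun w a) := by
    intro a ha
    rw [cfun, hM]
    exact claimA w hw (n - a) a (by omega)
  funext l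
  have hs := X_succ_of_lt w l.isLt
  rw [Fin.eta] at hs
  apply Prod.ext
  · show (X (Phi w) ((l : ℕ) + 1) - 2 * cfun (Phi w) ((l : ℕ) + 1))
      - (X (Phi w) (l : ℕ) - 2 * cfun (Phi w) (l : ℕ)) = (w l).1
    rw [hc ((l : ℕ) + 1) (by omega), hc (l : ℕ) (by omega),
      hXP ((l : ℕ) + 1) (by omega), hXP (l : ℕ) (by omega)]
    omega
  · rfl


lemma hpar_of (w : Fin n → ℤ × ℤ) (hw : IsWalk w) (hyend : (pos w n).2 = 0) :
    (2 : ℤ) ∣ (X w n - (n : ℤ) % 2) := by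
  have hp := parity w hw n le_rfl
  rw [hyend] at hp
  rw [X] at *
  omega

def theEquiv (n : ℕ) :
    {w : Fin n → ℤ × ℤ //
      IsWalk w ∧ (∀ a ≤ n, 0 ≤ (pos w a).1 ∧ 0 ≤ (pos w a).2) ∧ (pos w n).2 = 0} ≃
    {w : Fin n → ℤ × ℤ //
      IsWalk w ∧ (∀ a ≤ n, 0 ≤ (pos w a).2) ∧ pos w n = ((n : ℤ) % 2, 0)} where
  toFun p := by
    obtain ⟨w, hw, hq, hyend⟩ := p
    refine ⟨Psi w, isWalk_Psi w hw, ?_, ?_⟩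
    · have hX : ∀ b ≤ n, 0 ≤ X w b := fun b hb => (hq b hb).1
      have hpar := hpar_of w hw hyend
      intro a ha
      rw [pos_Psi w hX hpar a ha]
      exact (hq a ha).2
    · have hX : ∀ b ≤ n, 0 ≤ X w b := fun b hb => (hq b hb).1
      have hpar := hpar_of w hw hyend
      rw [pos_Psi w hX hpar n le_rfl]
      apply Prod.ext
      · show X w n - 2 * cfun w n = (n : ℤ) % 2
        have hmu : mu w n = X w n := mu_of_ge w (by omega)
        have hM : 2 * Mnum w = X w n - (n : ℤ) % 2 := by
          rw [Mnum]; exact Int.mul_ediv_cancel' hpar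
        have hXn : 0 ≤ X w n := hX n le_rfl
        rw [cfun, hmu]
        omega
      · exact hyend
  invFun q := by
    obtain ⟨w, hw, hh, hend⟩ := q
    refine ⟨Phi w, isWalk_Phi w hw, ?_, ?_⟩
    · intro a ha
      rw [pos_Phi w a ha]
      refine ⟨?_, hh a ha⟩
      show 0 ≤ X w a - 2 * mfun w a
      have h1 := m_le_X w a
      have h2 := m_nonpos w a
      omega
    · rw [pos_Phi w n le_rfl]
      show (pos w n).2 = 0
      rw [hend]
  left_inv := by
    rintro ⟨w, hw, hq, hyend⟩
    apply Subtype.ext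
    show Phi (Psi w) = w
    exact phi_psi w hw (fun b hb => (hq b hb).1) (hpar_of w hw hyend)
  right_inv := by
    rintro ⟨w, hw, hh, hend⟩
    apply Subtype.ext
    show Psi (Phi w) = w
    apply psi_phi w hw
    rw [X, hend]

end StmtAux

theorem stmt11 (n : ℕ) :
    Nat.card {w : Fin n → ℤ × ℤ //
      IsWalk w ∧ (∀ a ≤ n, 0 ≤ (pos w a).1 ∧ 0 ≤ (pos w a).2) ∧ (pos w n).2 = 0} =
    Nat.card {w : Fin n → ℤ × ℤ //
      IsWalk w ∧ (∀ a ≤ n, 0 ≤ (pos w a).2) ∧ pos w n = ((n : ℤ) % 2, 0)} := by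
  exact Nat.card_congr (StmtAux.theEquiv n)
end
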